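/- arXiv:2601.00401 — 8 statements merged into one kernel-verified Lean document; each statement's English description precedes it below -/
import Mathlib

section
/- If T₁ and T₂ are subsets of ℝ and T₁ ∩ T₂ = ∅, then T₁ and T₂ cannot both be α-winning (for the same α with 0 < α < 1). More precisely, if T₁ and T₂ are both (α,β)-winning for every β ∈ (0,1), then T₁ ∩ T₂ ≠ ∅. -/
namespace Schmidt

/-- A closed interval, given by its two endpoints. -/
abbrev Ivl := ℝ × ℝ

/-- The diameter (length) of an interval. -/
def diam (I : Ivl) : ℝ := I.2 - I.1

/-- The set of points of an interval. -/
def toSet (I : Ivl) : Set ℝ := Set.Icc I.1 I.2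

/-- `Sub I J` means the interval `I` is contained in the interval `J`. -/
def Sub (I J : Ivl) : Prop := toSet I ⊆ toSet J

/-- A strategy: a function producing a move from the finite sequence of
the opponent's moves so far. -/
abbrev Strategy := List Ivl → Ivl

/-- The list of Bob's moves `B 0, …, B n`. -/
def hist (B : ℕ → Ivl) (n : ℕ) : List Ivl := List.ofFn (fun i : Fin (n + 1) => B i)

/-- Bob's sequence of moves `B` is a legal play against Alice's strategy `σ`
in the `(α,β)`-game: `B 0` has positive diameter and each `B (n+1)` is a
subinterval of Alice's previous move `σ (hist B n)` of `β` times its diameter. -/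
def BobPlays (β : ℝ) (σ : Strategy) (B : ℕ → Ivl) : Prop :=
  0 < diam (B 0) ∧
  ∀ n, Sub (B (n + 1)) (σ (hist B n)) ∧ diam (B (n + 1)) = β * diam (σ (hist B n))

/-- `σ` is a legal strategy for Alice in the `(α,β)`-game: whenever Bob's
moves so far are legal, Alice's response is a subinterval of Bob's last move
of `α` times its diameter. -/
def AliceLegal (α β : ℝ) (σ : Strategy) : Prop :=
  ∀ B : ℕ → Ivl, ∀ n : ℕ, 0 < diam (B 0) →
    (∀ m, m < n → Sub (B (m + 1)) (σ (hist B m)) ∧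
      diam (B (m + 1)) = β * diam (σ (hist B m))) →
    Sub (σ (hist B n)) (B n) ∧ diam (σ (hist B n)) = α * diam (B n)

/-- `σ` is a winning strategy for Alice in Schmidt's `(α,β)`-game with target `T`:
it is legal, and in every run against it every point of the intersection of
Alice's moves lies in `T`. -/
def AliceWinsWith (α β : ℝ) (T : Set ℝ) (σ : Strategy) : Prop :=
  AliceLegal α β σ ∧
  ∀ B : ℕ → Ivl, BobPlays β σ B →
    ∀ x : ℝ, (∀ n, x ∈ toSet (σ (hist B n))) → x ∈ T

/-- `T` is `(α,β)`-winning: Alice has a winning strategy. -/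
def Winning (α β : ℝ) (T : Set ℝ) : Prop := ∃ σ, AliceWinsWith α β T σ

/-- The list of Alice's moves `A 0, …, A (n-1)`. -/
def histA (A : ℕ → Ivl) (n : ℕ) : List Ivl := List.ofFn (fun i : Fin n => A i)

/-- Alice's sequence of moves `A` is a legal play against Bob's strategy `τ`. -/
def AlicePlays (α : ℝ) (τ : Strategy) (A : ℕ → Ivl) : Prop :=
  ∀ n, Sub (A n) (τ (histA A n)) ∧ diam (A n) = α * diam (τ (histA A n))

/-- `τ` is a legal strategy for Bob in the `(α,β)`-game. -/
def BobLegal (α β : ℝ) (τ : Strategy) : Prop :=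
  0 < diam (τ []) ∧
  ∀ A : ℕ → Ivl, ∀ n : ℕ,
    (∀ m, m ≤ n → Sub (A m) (τ (histA A m)) ∧
      diam (A m) = α * diam (τ (histA A m))) →
    Sub (τ (histA A (n + 1))) (A n) ∧ diam (τ (histA A (n + 1))) = β * diam (A n)

/-- `τ` is a winning strategy for Bob in Schmidt's `(α,β)`-game with target `T`. -/
def BobWinsWith (α β : ℝ) (T : Set ℝ) (τ : Strategy) : Prop :=
  BobLegal α β τ ∧
  ∀ A : ℕ → Ivl, AlicePlays α τ A →
    ∀ x : ℝ, (∀ n, x ∈ toSet (A n)) → x ∉ T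

/-- Bob has a winning strategy in the `(α,β)`-game with target `T`. -/
def BobWinning (α β : ℝ) (T : Set ℝ) : Prop := ∃ τ, BobWinsWith α β T τ

/-- `V` is a Vitali set: it contains exactly one representative of each
coset of `ℚ` in `ℝ`. -/
def IsVitali (V : Set ℝ) : Prop :=
  ∀ x : ℝ, ∃! v : ℝ, v ∈ V ∧ ∃ q : ℚ, x - v = (q : ℝ)

/-- `P` is a partial Vitali set: it contains at most one representative of
each coset of `ℚ` in `ℝ`. -/
def IsPartialVitali (P : Set ℝ) : Prop :=
  ∀ x ∈ P, ∀ y ∈ P, (∃ q : ℚ, x - y = (q : ℝ)) → x = y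

/-- `T` is `(α,β,I)`-winning: Alice has a winning strategy in Schmidt's
`(α,β)`-game with target `T` when Bob's first move is required to be `I`. -/
def WinningFrom (α β : ℝ) (T : Set ℝ) (I : Ivl) : Prop :=
  ∃ σ : Strategy,
    (∀ B : ℕ → Ivl, B 0 = I → ∀ n : ℕ,
      (∀ m, m < n → Sub (B (m + 1)) (σ (hist B m)) ∧
        diam (B (m + 1)) = β * diam (σ (hist B m))) →
      Sub (σ (hist B n)) (B n) ∧ diam (σ (hist B n)) = α * diam (B n)) ∧
    (∀ B : ℕ → Ivl, B 0 = I → BobPlays β σ B →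
      ∀ x : ℝ, (∀ n, x ∈ toSet (σ (hist B n))) → x ∈ T)


/-- Auxiliary construction: interleave two Alice strategies against each other.
`mkB σ₁ σ₂ n` is the sequence of "Bob" moves fed to `σ₁`: the initial interval
is `[0,1]`, and each subsequent move is `σ₂`'s response to the history of
`σ₁`'s responses. -/
noncomputable def mkB (σ₁ σ₂ : Strategy) : ℕ → Ivl
  | 0 => ((0 : ℝ), (1 : ℝ))
  | n + 1 => σ₂ (List.ofFn fun i : Fin (n + 1) =>
      σ₁ (List.ofFn fun j : Fin (i.val + 1) => mkB σ₁ σ₂ j.val))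
  decreasing_by
    exact Nat.lt_succ_of_le (le_trans (Nat.le_of_lt_succ j.isLt) (Nat.le_of_lt_succ i.isLt))

/-- two sets that are both `(α,β)`-winning for every `β ∈ (0,1)`
(i.e. both `α`-winning) must intersect. -/
theorem stmt2 (α : ℝ) (hα0 : 0 < α) (hα1 : α < 1) (T₁ T₂ : Set ℝ)
    (h₁ : ∀ β : ℝ, 0 < β → β < 1 → Winning α β T₁)
    (h₂ : ∀ β : ℝ, 0 < β → β < 1 → Winning α β T₂) :
    (T₁ ∩ T₂).Nonempty := by
  obtain ⟨σ₁, hL₁, hW₁⟩ := h₁ α hα0 hα1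
  obtain ⟨σ₂, hL₂, hW₂⟩ := h₂ α hα0 hα1
  set B : ℕ → Ivl := mkB σ₁ σ₂ with hBdef
  set B' : ℕ → Ivl := fun n => σ₁ (hist B n) with hB'def
  have hB0 : B 0 = ((0 : ℝ), (1 : ℝ)) := by rw [hBdef, mkB]
  have hdB0 : diam (B 0) = 1 := by simp [hB0, diam]
  have hdB0pos : 0 < diam (B 0) := by rw [hdB0]; norm_num
  have hBs : ∀ n, B (n + 1) = σ₂ (hist B' n) := by
    intro n
    show mkB σ₁ σ₂ (n + 1) = _
    rw [mkB]
    rfl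
  -- Key simultaneous induction: legality of both interleaved plays.
  have key : ∀ n, (Sub (B' n) (B n) ∧ diam (B' n) = α * diam (B n)) ∧
      (Sub (B (n + 1)) (B' n) ∧ diam (B (n + 1)) = α * diam (B' n)) := by
    intro n
    induction n using Nat.strong_induction_on with
    | _ n ih =>
      have hP : Sub (B' n) (B n) ∧ diam (B' n) = α * diam (B n) := by
        exact hL₁ B n hdB0pos (fun m hm => (ih m hm).2)
      have hPall : ∀ m, m ≤ n → Sub (B' m) (B m) ∧ diam (B' m) = α * diam (B m) := by
        intro m hm
        rcases lt_or_eq_of_le hm with h | h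
        · exact (ih m h).1
        · subst h; exact hP
      have hdB'0 : 0 < diam (B' 0) := by
        have h0 := hPall 0 (Nat.zero_le _)
        rw [h0.2, hdB0]
        simpa using hα0
      have hQ := hL₂ B' n hdB'0 (fun m hm => by
        have h := hPall (m + 1) hm
        rw [← hBs m]
        exact ⟨h.1, h.2⟩)
      rw [← hBs n] at hQ
      exact ⟨hP, hQ⟩
  -- Positivity of diameters.
  have hpos : ∀ n, 0 < diam (B n) ∧ 0 < diam (B' n) := by
    intro n
    induction n with
    | zero =>
      refine ⟨hdB0pos, ?_⟩
      rw [(key 0).1.2]; exact mul_pos hα0 hdB0pos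
    | succ n ih =>
      have h1 : 0 < diam (B (n + 1)) := by
        rw [(key n).2.2]; exact mul_pos hα0 ih.2
      refine ⟨h1, ?_⟩
      rw [(key (n + 1)).1.2]; exact mul_pos hα0 h1
  -- The nested sequence of Alice's (σ₁'s) moves.
  set S : ℕ → Set ℝ := fun n => toSet (B' n) with hSdef
  have hmono : ∀ n, S (n + 1) ⊆ S n := by
    intro n
    exact subset_trans (key (n + 1)).1.1 (key n).2.1
  have hne : ∀ n, (S n).Nonempty := by
    intro n
    have := (hpos n).2
    have : (B' n).1 ≤ (B' n).2 := by
      have h := (hpos n).2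
      simp only [diam] at h
      linarith
    exact Set.nonempty_Icc.mpr this
  have hcomp : ∀ n, IsCompact (S n) := fun n => isCompact_Icc
  have hclosed : ∀ n, IsClosed (S n) := fun n => isClosed_Icc
  obtain ⟨x, hx⟩ := IsCompact.nonempty_iInter_of_sequence_nonempty_isCompact_isClosed
    S hmono hne (hcomp 0) hclosed
  have hxS : ∀ n, x ∈ S n := fun n => Set.mem_iInter.mp hx n
  -- x ∈ T₁ : B is a legal Bob play against σ₁.
  have hx1 : x ∈ T₁ := by
    refine hW₁ B ⟨hdB0pos, fun n => (key n).2⟩ x (fun n => hxS n)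
  -- x ∈ T₂ : B' is a legal Bob play against σ₂.
  have hx2 : x ∈ T₂ := by
    refine hW₂ B' ⟨?_, fun n => ?_⟩ x (fun n => ?_)
    · exact (hpos 0).2
    · rw [← hBs n]
      exact (key (n + 1)).1
    · rw [← hBs n]
      exact (key (n + 1)).1.1 (hxS (n + 1))
  exact ⟨x, hx1, hx2⟩

end Schmidt
end

section
/- No Vitali set is α-winning: for every Vitali set V ⊆ ℝ and every α ∈ (0,1), there exists β ∈ (0,1) such that Alice does not have a winning strategy in Schmidt's (α,β)-game with target V. -/
namespace Schmidt

/-!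
Strategy stealing against a translate. Let `σ` be a strategy for Alice in the `(α,α)`-game and
`t` a real number. Bob plays two games against `σ` at once: in the second game he copies
Alice's moves of the first game translated by `-t`, and in the first game he copies Alice's
moves of the second game translated by `t`. Since `β = α`, these copies are legal moves for
Bob, and the outcome of the second game is the outcome of the first minus `t`. So if `σ`
wins both games, the target contains a point `x` together with `x - t`; for a Vitali set and
`t = 1` this is impossible.
-/

def shift (I : Ivl) (t : ℝ) : Ivl := (I.1 + t, I.2 + t)

@[simp]
lemma mem_toSet_shift {x t : ℝ} {I : Ivl} : x ∈ toSet (shift I t) ↔ x - t ∈ toSet I := by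
  simp only [toSet, shift, Set.mem_Icc, le_sub_iff_add_le, sub_le_iff_le_add]

@[simp]
lemma diam_shift (I : Ivl) (t : ℝ) : diam (shift I t) = diam I := by
  simp only [diam, shift, add_sub_add_right_eq_sub]

@[simp]
lemma shift_shift (I : Ivl) (s t : ℝ) : shift (shift I s) t = shift I (s + t) := by
  simp only [shift, add_assoc]

@[simp]
lemma shift_zero (I : Ivl) : shift I 0 = I := by
  simp only [shift, add_zero]

lemma Sub.shift {I J : Ivl} (h : Sub I J) (t : ℝ) : Sub (shift I t) (shift J t) :=
  fun _ hx => mem_toSet_shift.2 (h (mem_toSet_shift.1 hx))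

def IsMove (c : ℝ) (I J : Ivl) : Prop := Sub I J ∧ diam I = c * diam J

lemma IsMove.shift {c : ℝ} {I J : Ivl} (h : IsMove c I J) (t : ℝ) :
    IsMove c (shift I t) (shift J t) :=
  ⟨h.1.shift t, by simpa only [diam_shift] using h.2⟩

lemma exists_mem_toSet_of_nested {I : ℕ → Ivl} (hsub : ∀ n, Sub (I (n + 1)) (I n))
    (hdiam : ∀ n, 0 ≤ diam (I n)) : ∃ x, ∀ n, x ∈ toSet (I n) :=
  ⟨_, Set.mem_iInter.1 <| ciSup_mem_iInter_Icc_of_antitone_Icc (antitone_nat_of_succ_le hsub)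
    fun n => sub_nonneg.1 (hdiam n)⟩

lemma exists_mem_alice_moves {α β : ℝ} {σ : Strategy} {B : ℕ → Ivl} (hα : 0 ≤ α) (hβ : 0 ≤ β)
    (hB : BobPlays β σ B) (hA : ∀ n, IsMove α (σ (hist B n)) (B n)) :
    ∃ x, ∀ n, x ∈ toSet (σ (hist B n)) := by
  have hdiamB : ∀ n, 0 ≤ diam (B n) := by
    intro n
    induction n with
    | zero => exact hB.1.le
    | succ n ih => rw [(hB.2 n).2, (hA n).2]; positivity
  refine exists_mem_toSet_of_nested (fun n => ?_) (fun n => ?_)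
  · exact (hA (n + 1)).1.trans (hB.2 n).1
  · rw [(hA n).2]; exact mul_nonneg hα (hdiamB n)

section Mirror

variable (σ : Strategy) (t : ℝ)

/-- Bob's moves in the first game: `[0, 1]`, then Alice's moves of the second game shifted
by `t`. -/
def mainPlay : ℕ → Ivl
  | 0 => (0, 1)
  | n + 1 => shift (σ (List.ofFn fun i : Fin (n + 1) =>
      shift (σ (List.ofFn fun j : Fin (i + 1) => mainPlay j)) (-t))) t
termination_by n => n
decreasing_by exact lt_of_lt_of_le j.isLt (Nat.succ_le_succ (Nat.le_of_lt_succ i.isLt))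

def shiftedPlay (n : ℕ) : Ivl := shift (σ (hist (mainPlay σ t) n)) (-t)

lemma mainPlay_zero : mainPlay σ t 0 = (0, 1) := by
  rw [mainPlay]

lemma mainPlay_succ (n : ℕ) :
    mainPlay σ t (n + 1) = shift (σ (hist (shiftedPlay σ t) n)) t := by
  rw [mainPlay]
  rfl

lemma diam_mainPlay_zero : diam (mainPlay σ t 0) = 1 := by
  simp [mainPlay_zero, diam]

variable {σ t} {α : ℝ}

lemma diam_shiftedPlay_zero (h : IsMove α (σ (hist (mainPlay σ t) 0)) (mainPlay σ t 0)) :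
    diam (shiftedPlay σ t 0) = α := by
  rw [shiftedPlay, diam_shift, h.2, diam_mainPlay_zero, mul_one]

lemma isMove_mainPlay_succ {n : ℕ}
    (h : IsMove α (σ (hist (shiftedPlay σ t) n)) (shiftedPlay σ t n)) :
    IsMove α (mainPlay σ t (n + 1)) (σ (hist (mainPlay σ t) n)) := by
  simpa [mainPlay_succ, shiftedPlay] using h.shift t

lemma isMove_shiftedPlay_succ {n : ℕ}
    (h : IsMove α (σ (hist (mainPlay σ t) (n + 1))) (mainPlay σ t (n + 1))) :
    IsMove α (shiftedPlay σ t (n + 1)) (σ (hist (shiftedPlay σ t) n)) := by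
  simpa [mainPlay_succ, shiftedPlay] using h.shift (-t)

lemma isMove_alice_mainPlay_and_shiftedPlay (hσ : AliceLegal α α σ) (hα : 0 < α) (n : ℕ) :
    IsMove α (σ (hist (mainPlay σ t) n)) (mainPlay σ t n) ∧
      IsMove α (σ (hist (shiftedPlay σ t) n)) (shiftedPlay σ t n) := by
  induction n using Nat.strong_induction_on with
  | _ n ih =>
    have hmain : IsMove α (σ (hist (mainPlay σ t) n)) (mainPlay σ t n) :=
      hσ _ n (by simp [diam_mainPlay_zero]) fun m hm => isMove_mainPlay_succ (ih m hm).2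
    have hmain_le : ∀ m ≤ n, IsMove α (σ (hist (mainPlay σ t) m)) (mainPlay σ t m) := by
      intro m hm
      rcases hm.lt_or_eq with hm | rfl
      exacts [(ih m hm).1, hmain]
    refine ⟨hmain, hσ _ n ?_ fun m hm => isMove_shiftedPlay_succ (hmain_le (m + 1) hm)⟩
    rwa [diam_shiftedPlay_zero (hmain_le 0 n.zero_le)]

lemma bobPlays_mainPlay (hσ : AliceLegal α α σ) (hα : 0 < α) : BobPlays α σ (mainPlay σ t) :=
  ⟨by simp [diam_mainPlay_zero], fun n =>
    isMove_mainPlay_succ (isMove_alice_mainPlay_and_shiftedPlay hσ hα n).2⟩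

lemma bobPlays_shiftedPlay (hσ : AliceLegal α α σ) (hα : 0 < α) :
    BobPlays α σ (shiftedPlay σ t) :=
  ⟨by rwa [diam_shiftedPlay_zero (isMove_alice_mainPlay_and_shiftedPlay hσ hα 0).1],
    fun n => isMove_shiftedPlay_succ (isMove_alice_mainPlay_and_shiftedPlay hσ hα (n + 1)).1⟩

end Mirror

theorem not_winning_of_sub_notMem {α t : ℝ} {T : Set ℝ} (hα : 0 < α)
    (hT : ∀ x ∈ T, x - t ∉ T) : ¬ Winning α α T := by
  rintro ⟨σ, hσ, hwin⟩
  have hmoves := isMove_alice_mainPlay_and_shiftedPlay (t := t) hσ hα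
  obtain ⟨x, hx⟩ := exists_mem_alice_moves hα.le hα.le (bobPlays_mainPlay hσ hα)
    fun n => (hmoves n).1
  refine hT x (hwin _ (bobPlays_mainPlay hσ hα) x hx)
    (hwin _ (bobPlays_shiftedPlay (t := t) hσ hα) (x - t) fun n => ?_)
  have hx' := (hmoves (n + 1)).1.1 (hx (n + 1))
  rwa [mainPlay_succ, mem_toSet_shift] at hx'

lemma IsVitali.isPartialVitali {V : Set ℝ} (hV : IsVitali V) : IsPartialVitali V :=
  fun x hx y hy hxy => (hV x).unique ⟨hx, 0, by simp⟩ ⟨hy, hxy⟩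

/-- no Vitali set is `α`-winning. -/
theorem stmt3 (V : Set ℝ) (hV : IsVitali V) (α : ℝ) (hα0 : 0 < α) (hα1 : α < 1) :
    ∃ β : ℝ, 0 < β ∧ β < 1 ∧ ¬ Winning α β V := by
  refine ⟨α, hα0, hα1, not_winning_of_sub_notMem (t := 1) hα0 fun x hx hx1 => ?_⟩
  have := hV.isPartialVitali x hx (x - 1) hx1 ⟨1, by simp⟩
  linarith

end Schmidt
end

section
/- Let V be a Vitali set, q ∈ ℚ \ {0}, and suppose 0 < β < α < 1. If τ is any strategy for Alice in Schmidt's (α,β)-game, then there exist two runs of the game, both played according to τ, producing outcome points x and x′ with x′ = x + q. Consequently x and x′ cannot both belong to V. -/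
namespace Schmidt

-- auxiliary development
def shft (r : ℝ) (I : Ivl) : Ivl := (I.1 + r, I.2 + r)

@[simp] lemma diam_shft (r : ℝ) (I : Ivl) : diam (shft r I) = diam I := by
  simp [diam, shft]

lemma sub_shft (r : ℝ) {I J : Ivl} (h : Sub I J) : Sub (shft r I) (shft r J) := by
  intro x hx
  simp only [toSet, shft, Set.mem_Icc] at hx ⊢
  have hm : x - r ∈ toSet I := by
    simp only [toSet, Set.mem_Icc]; constructor <;> linarith
  have := h hm
  simp only [toSet, Set.mem_Icc] at this
  constructor <;> linarith

lemma sub_of_sub_shft (r : ℝ) {I J : Ivl} (h : Sub (shft r I) (shft r J)) : Sub I J := by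
  have := sub_shft (-r) h
  simpa [shft, Sub, toSet] using this

def sigOf (q : ℝ) (τ : Strategy) : Strategy :=
  fun h => shft (-q) (τ (h.map (shft q)))

def Bs (τ : Strategy) (q β : ℝ) : ℕ → Ivl
  | 0 => (0, 1)
  | n + 1 =>
    let A' := sigOf q τ (List.ofFn fun i : Fin (n+1) =>
       τ (List.ofFn fun j : Fin (i.1+1) => Bs τ q β j))
    (A'.1, A'.1 + β * diam (τ (List.ofFn fun i : Fin (n+1) => Bs τ q β i)))
  termination_by n => n
  decreasing_by
  · have := j.isLt; have := i.isLt; omega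
  · have := i.isLt; omega

def Cs (τ : Strategy) (q β : ℝ) (n : ℕ) : Ivl := τ (hist (Bs τ q β) n)
def As (τ : Strategy) (q β : ℝ) (n : ℕ) : Ivl := sigOf q τ (hist (Cs τ q β) n)
def Bs' (τ : Strategy) (q β : ℝ) (n : ℕ) : Ivl := shft q (Cs τ q β n)

variable {τ : Strategy} {q β α : ℝ}

lemma Bs_zero : Bs τ q β 0 = (0, 1) := by rw [Bs]

lemma Bs_succ (n : ℕ) : Bs τ q β (n+1) =
    ((As τ q β n).1, (As τ q β n).1 + β * diam (Cs τ q β n)) := by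
  rw [Bs]; rfl

lemma tau_hist_Bs' (n : ℕ) : τ (hist (Bs' τ q β) n) = shft q (As τ q β n) := by
  have h1 : hist (Bs' τ q β) n = (hist (Cs τ q β) n).map (shft q) := by
    simp [hist, Bs', List.map_ofFn]; rfl
  rw [h1]
  show τ _ = shft q (shft (-q) (τ _))
  rw [Prod.ext_iff]
  constructor <;> simp [shft]

lemma mkSub (hβ0 : 0 < β) (hβα : β < α) (m : ℕ)
    (hd : diam (As τ q β m) = α * diam (Cs τ q β m)) (hdC : 0 ≤ diam (Cs τ q β m)) :
    Sub (Bs τ q β (m+1)) (As τ q β m) ∧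
      diam (Bs τ q β (m+1)) = β * diam (Cs τ q β m) := by
  constructor
  · rw [Bs_succ m]
    intro x hx
    simp only [toSet, Set.mem_Icc] at hx ⊢
    have h2 : (As τ q β m).2 - (As τ q β m).1 = α * diam (Cs τ q β m) := hd
    have h3 : β * diam (Cs τ q β m) ≤ α * diam (Cs τ q β m) := by nlinarith
    exact ⟨hx.1, by linarith [hx.2]⟩
  · rw [Bs_succ m]; simp only [diam]; ring

lemma key (hβ0 : 0 < β) (hβα : β < α) (hα1 : α < 1) (hτ : AliceLegal α β τ) :
    ∀ n : ℕ,
      (Sub (Cs τ q β n) (Bs τ q β n) ∧ diam (Cs τ q β n) = α * diam (Bs τ q β n)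
        ∧ 0 < diam (Bs τ q β n)) ∧
      (Sub (As τ q β n) (Cs τ q β n) ∧ diam (As τ q β n) = α * diam (Cs τ q β n)) := by
  have hα0 : 0 < α := lt_trans hβ0 hβα
  have hB0 : (0:ℝ) < diam (Bs τ q β 0) := by rw [Bs_zero]; norm_num [diam]
  intro n
  induction n using Nat.strong_induction_on with
  | _ n ih =>
    have hpos : 0 < diam (Bs τ q β n) := by
      cases n with
      | zero => exact hB0
      | succ m =>
        have h1 := (ih m (lt_add_one m)).1
        have : diam (Bs τ q β (m+1)) = β * diam (Cs τ q β m) := by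
          rw [Bs_succ m]; simp only [diam]; ring
        rw [this, h1.2.1]
        exact mul_pos hβ0 (mul_pos hα0 h1.2.2)
    have legB : ∀ m, m < n → Sub (Bs τ q β (m+1)) (τ (hist (Bs τ q β) m)) ∧
        diam (Bs τ q β (m+1)) = β * diam (τ (hist (Bs τ q β) m)) := by
      intro m hm
      have h1 := (ih m hm).1
      have h2 := (ih m hm).2
      have hdC : 0 ≤ diam (Cs τ q β m) := by
        rw [h1.2.1]; exact le_of_lt (mul_pos hα0 h1.2.2)
      have hms := mkSub hβ0 hβα m h2.2 hdC
      exact ⟨fun x hx => h2.1 (hms.1 hx), hms.2⟩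
    have f1 := hτ (Bs τ q β) n hB0 legB
    have fact1 : Sub (Cs τ q β n) (Bs τ q β n) ∧ diam (Cs τ q β n) = α * diam (Bs τ q β n)
        ∧ 0 < diam (Bs τ q β n) := ⟨f1.1, f1.2, hpos⟩
    -- now the second game
    have fact1all : ∀ m, m ≤ n → Sub (Cs τ q β m) (Bs τ q β m) ∧
        diam (Cs τ q β m) = α * diam (Bs τ q β m) ∧ 0 < diam (Bs τ q β m) := by
      intro m hm
      rcases lt_or_eq_of_le hm with h | h
      · exact (ih m h).1
      · subst h; exact fact1
    have posB'0 : 0 < diam (Bs' τ q β 0) := by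
      have := fact1all 0 (Nat.zero_le n)
      simp only [Bs', diam_shft]
      rw [this.2.1]
      exact mul_pos hα0 this.2.2
    have legB' : ∀ k, k < n → Sub (Bs' τ q β (k+1)) (τ (hist (Bs' τ q β) k)) ∧
        diam (Bs' τ q β (k+1)) = β * diam (τ (hist (Bs' τ q β) k)) := by
      intro k hk
      rw [tau_hist_Bs' (τ := τ) (q := q) (β := β) k]
      have h1 := (ih k hk).1
      have h2 := (ih k hk).2
      have hdC : 0 ≤ diam (Cs τ q β k) := by
        rw [h1.2.1]; exact le_of_lt (mul_pos hα0 h1.2.2)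
      have hms := mkSub hβ0 hβα k h2.2 hdC
      have t1 : Sub (Cs τ q β (k+1)) (Bs τ q β (k+1)) := (fact1all (k+1) hk).1
      constructor
      · exact sub_shft q (fun x hx => hms.1 (t1 hx))
      · simp only [Bs', diam_shft]
        have e1 : diam (Cs τ q β (k+1)) = α * diam (Bs τ q β (k+1)) := (fact1all (k+1) hk).2.1
        rw [e1, hms.2, h2.2]; ring
    have f2 := hτ (Bs' τ q β) n posB'0 legB'
    rw [tau_hist_Bs' (τ := τ) (q := q) (β := β) n] at f2
    refine ⟨fact1, sub_of_sub_shft q f2.1, ?_⟩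
    have := f2.2
    simp only [Bs', diam_shft] at this
    exact this

/-- for `0 < β < α < 1` and any legal Alice strategy `τ`, there
are two runs of the game following `τ` whose outcome points differ by a given
nonzero rational `q`; hence the two outcomes cannot both lie in a Vitali set. -/
theorem stmt5 (V : Set ℝ) (hV : IsVitali V) (q : ℚ) (hq : q ≠ 0)
    (α β : ℝ) (hβ0 : 0 < β) (hβα : β < α) (hα1 : α < 1)
    (τ : Strategy) (hτ : AliceLegal α β τ) :
    ∃ B B' : ℕ → Ivl, ∃ x x' : ℝ,
      BobPlays β τ B ∧ BobPlays β τ B' ∧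
      (∀ n, x ∈ toSet (τ (hist B n))) ∧
      (∀ n, x' ∈ toSet (τ (hist B' n))) ∧
      x' = x + (q : ℝ) ∧ ¬ (x ∈ V ∧ x' ∈ V) := by
  have hα0 : 0 < α := lt_trans hβ0 hβα
  have K := key (q := (q : ℝ)) hβ0 hβα hα1 hτ
  have hdCnn : ∀ n, 0 ≤ diam (Cs τ (q:ℝ) β n) := fun n => by
    rw [(K n).1.2.1]; exact le_of_lt (mul_pos hα0 (K n).1.2.2)
  have step : ∀ n, Sub (Bs τ (q:ℝ) β (n+1)) (As τ (q:ℝ) β n) ∧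
      diam (Bs τ (q:ℝ) β (n+1)) = β * diam (Cs τ (q:ℝ) β n) :=
    fun n => mkSub hβ0 hβα n (K n).2.2 (hdCnn n)
  have subBB : ∀ n, Sub (Bs τ (q:ℝ) β (n+1)) (Bs τ (q:ℝ) β n) :=
    fun n x hx => (K n).1.1 ((K n).2.1 ((step n).1 hx))
  have subLe : ∀ m n, m ≤ n → Sub (Bs τ (q:ℝ) β n) (Bs τ (q:ℝ) β m) := by
    intro m n hmn
    induction n, hmn using Nat.le_induction with
    | base => exact fun x hx => hx
    | succ k hk ih => exact fun x hx => ih (subBB k hx)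
  have dnn : ∀ n, (Bs τ (q:ℝ) β n).1 ≤ (Bs τ (q:ℝ) β n).2 := fun n => by
    have := (K n).1.2.2; simp only [diam] at this; linarith
  have sub_end : ∀ I J : Ivl, Sub I J → I.1 ≤ I.2 → J.1 ≤ I.1 ∧ I.2 ≤ J.2 := by
    intro I J h hle
    have h1 := h (show I.1 ∈ toSet I from ⟨le_refl _, hle⟩)
    have h2 := h (show I.2 ∈ toSet I from ⟨hle, le_refl _⟩)
    exact ⟨h1.1, h2.2⟩
  have hbdd : BddAbove (Set.range fun n => (Bs τ (q:ℝ) β n).1) := by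
    refine ⟨(Bs τ (q:ℝ) β 0).2, ?_⟩
    rintro y ⟨m, rfl⟩
    have := sub_end _ _ (subLe 0 m (Nat.zero_le m)) (dnn m)
    linarith [this.2, dnn m]
  set x : ℝ := ⨆ n, (Bs τ (q:ℝ) β n).1 with hx'
  have hmemB : ∀ n, x ∈ toSet (Bs τ (q:ℝ) β n) := by
    intro n
    constructor
    · exact le_ciSup hbdd n
    · refine ciSup_le fun m => ?_
      rcases le_total m n with h | h
      · have := sub_end _ _ (subLe m n h) (dnn n)
        linarith [this.1, dnn n]
      · have := sub_end _ _ (subLe n m h) (dnn m)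
        linarith [this.2, dnn m]
  have hmemA : ∀ n, x ∈ toSet (As τ (q:ℝ) β n) := fun n => (step n).1 (hmemB (n+1))
  have hmemC : ∀ n, x ∈ toSet (Cs τ (q:ℝ) β n) := fun n => (K n).2.1 (hmemA n)
  refine ⟨Bs τ (q:ℝ) β, Bs' τ (q:ℝ) β, x, x + (q:ℝ), ?_, ?_, ?_, ?_, rfl, ?_⟩
  · refine ⟨?_, fun n => ?_⟩
    · rw [Bs_zero]; norm_num [diam]
    · exact ⟨fun y hy => (K n).2.1 ((step n).1 hy), (step n).2⟩
  · refine ⟨?_, fun n => ?_⟩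
    · show 0 < diam (shft (q:ℝ) (Cs τ (q:ℝ) β 0))
      rw [diam_shft, (K 0).1.2.1]
      exact mul_pos hα0 (K 0).1.2.2
    · rw [tau_hist_Bs' (τ := τ) (q := (q:ℝ)) (β := β) n]
      constructor
      · exact sub_shft (q:ℝ) (fun y hy => (step n).1 ((K (n+1)).1.1 hy))
      · show diam (shft (q:ℝ) (Cs τ (q:ℝ) β (n+1))) = β * diam (shft (q:ℝ) (As τ (q:ℝ) β n))
        rw [diam_shft, diam_shft, (K (n+1)).1.2.1, (step n).2, (K n).2.2]
        ring
  · exact hmemC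
  · intro n
    rw [tau_hist_Bs' (τ := τ) (q := (q:ℝ)) (β := β) n]
    have := hmemA n
    simp only [toSet, shft, Set.mem_Icc] at this ⊢
    constructor <;> linarith [this.1, this.2]
  · rintro ⟨h1, h2⟩
    obtain ⟨v, -, huniq⟩ := hV x
    have e1 : x = v := huniq x ⟨h1, 0, by simp⟩
    have e2 : x + (q:ℝ) = v := huniq (x + (q:ℝ)) ⟨h2, -q, by push_cast; ring⟩
    have : (q:ℝ) = 0 := by linarith [e1, e2]
    exact hq (by exact_mod_cast this)

end Schmidt
end

section
/- If 0 < α < 1/12, α < β < 1, and I is a fixed closed interval of positive length, then there exists a Vitali set V such that Alice has a winning strategy in Schmidt's (α,β)-game with target V when Bob's first move is required to be I (i.e., V is (α,β,I)-winning). -/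
namespace Schmidt

/-!
At level `n` Bob's interval has length `dₙ = (αβ)ⁿ · diam I`, and Alice answers with the interval
of length `α dₙ` starting at the first point of a grid `gₙ ℤ` to the right of Bob's left endpoint.
So for every `n`, two outcomes differ by at most `α dₙ` from a multiple of `gₙ`. Enumerating `ℚ`
so that each rational `q` recurs at infinitely many levels, the spacing `gₙ ∈ [dₙ/6, dₙ/3]` is
chosen so that the level's rational lies at distance more than `α dₙ` from `gₙ ℤ` (halfway
between two grid points, or inside `(α dₙ, gₙ - α dₙ)`) as soon as `2 α dₙ ≤ |q|`, which happens
since `dₙ → 0`. Hence no two outcomes differ by a nonzero rational, and the set of outcomes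
extends to a Vitali set.
-/

open Filter Topology

lemma le_abs_intCast_add_half (k : ℤ) : (1 : ℝ) / 2 ≤ |(k : ℝ) + 1 / 2| := by
  rcases le_or_gt 0 k with hk | hk
  · have : (0 : ℝ) ≤ k := by exact_mod_cast hk
    rw [abs_of_pos (by linarith)]
    linarith
  · have : (k : ℝ) ≤ -1 := by exact_mod_cast Int.le_sub_one_of_lt hk
    rw [abs_of_neg (by linarith)]
    linarith

lemma exists_spacing_avoiding_of_nonneg {G a q : ℝ} (ha : 0 < a) (hG : 2 * a < G)
    (hq : 2 * a ≤ q) : ∃ g, G ≤ g ∧ g ≤ 2 * G ∧ ∀ k : ℤ, a < |q - k * g| := by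
  have hG0 : 0 < G := by linarith
  rcases le_or_gt q (3 * G / 2) with hq_small | hq_big
  · refine ⟨2 * G, by linarith, le_rfl, fun k => ?_⟩
    rcases le_or_gt k 0 with hk | hk
    · have : (k : ℝ) * (2 * G) ≤ 0 :=
        mul_nonpos_of_nonpos_of_nonneg (by exact_mod_cast hk) (by linarith)
      rw [abs_of_pos (by linarith)]
      linarith
    · have : 2 * G ≤ (k : ℝ) * (2 * G) :=
        le_mul_of_one_le_left (by linarith) (by exact_mod_cast hk)
      rw [abs_of_neg (by linarith)]
      linarith
  · -- write `q = (m + 1/2) * g`; then `q - k * g` is a half-integer multiple of `g`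
    set m := ⌊q / G - 1 / 2⌋
    have hqG : 3 / 2 < q / G := by rw [lt_div_iff₀ hG0]; linarith
    have hm1 : (1 : ℝ) ≤ m := by exact_mod_cast Int.le_floor.mpr (by push_cast; linarith)
    have hm_le : (m : ℝ) + 1 / 2 ≤ q / G := by linarith [Int.floor_le (q / G - 1 / 2)]
    have hm_lt : q / G < m + 3 / 2 := by linarith [Int.lt_floor_add_one (q / G - 1 / 2)]
    clear_value m
    obtain ⟨g, rfl⟩ : ∃ g, q = (m + 1 / 2) * g := ⟨q / (m + 1 / 2), by field_simp⟩
    have hGg : G ≤ g := by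
      rw [le_div_iff₀ hG0] at hm_le; nlinarith
    refine ⟨g, hGg, ?_, fun k => ?_⟩
    · rw [div_lt_iff₀ hG0] at hm_lt; nlinarith
    · have : (m + 1 / 2) * g - k * g = ((m - k : ℤ) + 1 / 2) * g := by push_cast; ring
      rw [this, abs_mul, abs_of_pos (show 0 < g by linarith)]
      nlinarith [le_abs_intCast_add_half (m - k)]

lemma exists_spacing_avoiding {G a q : ℝ} (ha : 0 < a) (hG : 2 * a < G) (hq : 2 * a ≤ |q|) :
    ∃ g, G ≤ g ∧ g ≤ 2 * G ∧ ∀ k : ℤ, a < |q - k * g| := by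
  rcases le_or_gt 0 q with hq0 | hq0
  · exact exists_spacing_avoiding_of_nonneg ha hG (by rwa [abs_of_nonneg hq0] at hq)
  · rw [abs_of_neg hq0] at hq
    obtain ⟨g, hGg, hg, hk⟩ := exists_spacing_avoiding_of_nonneg ha hG hq
    refine ⟨g, hGg, hg, fun k => ?_⟩
    have h := hk (-k)
    rwa [show -q - ((-k : ℤ) : ℝ) * g = -(q - k * g) by push_cast; ring, abs_neg] at h

/-- The constant `1/12` enters here: a spacing in `[d/6, d/3]` exceeds `2αd`, and leaves room for
an interval of length `αd < d/12` after it. -/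
lemma exists_grid_spacing {α d : ℝ} (hα0 : 0 < α) (hα : α < 1 / 12) (hd : 0 < d) (q : ℝ) :
    ∃ g, 0 < g ∧ g + α * d ≤ d ∧ (2 * (α * d) ≤ |q| → ∀ k : ℤ, α * d < |q - k * g|) := by
  have hαd : α * d < d / 12 := by nlinarith
  by_cases hq : 2 * (α * d) ≤ |q|
  · obtain ⟨g, hg6, hg3, hk⟩ :=
      exists_spacing_avoiding (G := d / 6) (mul_pos hα0 hd) (by linarith) hq
    exact ⟨g, by linarith, by linarith, fun _ => hk⟩
  · exact ⟨d / 6, by linarith, by linarith, fun h => absurd h hq⟩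

noncomputable def snap (α g : ℝ) (J : Ivl) : Ivl :=
  (⌈J.1 / g⌉ * g, ⌈J.1 / g⌉ * g + α * diam J)

lemma diam_snap (α g : ℝ) (J : Ivl) : diam (snap α g J) = α * diam J := by
  simp only [diam, snap]; ring

lemma snap_sub {α g : ℝ} {J : Ivl} (hg : 0 < g) (hfit : g + α * diam J ≤ diam J) :
    Sub (snap α g J) J := by
  have h_le : J.1 ≤ ⌈J.1 / g⌉ * g := (div_le_iff₀ hg).mp (Int.le_ceil _)
  have h_lt : (⌈J.1 / g⌉ : ℝ) * g < J.1 + g := by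
    calc (⌈J.1 / g⌉ : ℝ) * g < (J.1 / g + 1) * g := by gcongr; exact Int.ceil_lt_add_one _
      _ = J.1 + g := by field_simp
  refine Set.Icc_subset_Icc h_le ?_
  show ⌈J.1 / g⌉ * g + α * diam J ≤ J.2
  simp only [diam] at hfit ⊢
  linarith

noncomputable def gridStrategy (α : ℝ) (g : ℕ → ℝ) : Strategy := fun h =>
  snap α (g (h.length - 1)) (h.getLastD (0, 0))

lemma gridStrategy_hist (α : ℝ) (g : ℕ → ℝ) (B : ℕ → Ivl) (n : ℕ) :
    gridStrategy α g (hist B n) = snap α (g n) (B n) := by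
  simp only [gridStrategy, hist, List.length_ofFn, Nat.add_sub_cancel]
  rw [List.getLastD_eq_getLast?, List.getLast?_eq_some_getLast (by simp), Option.getD_some,
    List.getLast_ofFn]
  simp

def gridOutcomes (g w : ℕ → ℝ) : Set ℝ :=
  {x | ∀ n, ∃ m : ℤ, x ∈ Set.Icc (m * g n) (m * g n + w n)}

lemma isPartialVitali_gridOutcomes {g w : ℕ → ℝ}
    (h : ∀ q : ℚ, q ≠ 0 → ∃ n, ∀ k : ℤ, w n < |q - k * g n|) :
    IsPartialVitali (gridOutcomes g w) := by
  rintro x hx y hy ⟨q, hq⟩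
  by_contra hxy
  obtain ⟨n, hn⟩ := h q (by rintro rfl; exact hxy (by simpa [sub_eq_zero] using hq))
  obtain ⟨m₁, hx₁, hx₂⟩ := hx n
  obtain ⟨m₂, hy₁, hy₂⟩ := hy n
  refine (hn (m₁ - m₂)).not_ge (abs_le.mpr ⟨?_, ?_⟩) <;> push_cast <;> linarith

lemma diam_eq_pow_mul_of_legal {α β : ℝ} {σ : Strategy}
    (hσ : ∀ B n, diam (σ (hist B n)) = α * diam (B n)) {B : ℕ → Ivl} {n : ℕ}
    (hB : ∀ m < n, diam (B (m + 1)) = β * diam (σ (hist B m))) :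
    diam (B n) = (α * β) ^ n * diam (B 0) := by
  induction n with
  | zero => simp
  | succ n ih =>
    rw [hB n n.lt_succ_self, hσ, ih fun m hm => hB m (by omega), pow_succ]
    ring

lemma winningFrom_of_gridOutcomes_subset {α β : ℝ} {I : Ivl} {T : Set ℝ} {g : ℕ → ℝ}
    (hg : ∀ n, 0 < g n) (hfit : ∀ n, g n + α * ((α * β) ^ n * diam I) ≤ (α * β) ^ n * diam I)
    (hT : gridOutcomes g (fun n => α * ((α * β) ^ n * diam I)) ⊆ T) :
    WinningFrom α β T I := by
  have hσ : ∀ B n, diam (gridStrategy α g (hist B n)) = α * diam (B n) := fun B n => by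
    rw [gridStrategy_hist, diam_snap]
  refine ⟨gridStrategy α g, fun B hB0 n hB => ?_, fun B hB0 hB x hx => hT fun n => ?_⟩
  · have hd := diam_eq_pow_mul_of_legal hσ fun m hm => (hB m hm).2
    rw [hB0] at hd
    rw [gridStrategy_hist]
    exact ⟨snap_sub (hg n) (hd ▸ hfit n), diam_snap _ _ _⟩
  · have hd := diam_eq_pow_mul_of_legal hσ (n := n) fun m _ => (hB.2 m).2
    rw [hB0] at hd
    have hxn := hx n
    rw [gridStrategy_hist] at hxn
    refine ⟨⌈(B n).1 / g n⌉, ?_⟩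
    simp only [← hd]
    exact hxn

lemma exists_transversal_superset {X : Type*} (r : Setoid X) {P : Set X}
    (hP : ∀ x ∈ P, ∀ y ∈ P, r x y → x = y) : ∃ V, P ⊆ V ∧ ∀ x, ∃! v, v ∈ V ∧ r x v := by
  classical
  let rep : Quotient r → X := fun c =>
    if h : ∃ p ∈ P, Quotient.mk r p = c then h.choose else c.out
  have mk_rep : ∀ c, Quotient.mk r (rep c) = c := fun c => by
    simp only [rep]
    split_ifs with h
    exacts [h.choose_spec.2, c.out_eq]
  refine ⟨Set.range rep, fun p hp => ⟨Quotient.mk r p, ?_⟩,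
    fun x => ⟨rep (Quotient.mk r x), ⟨⟨_, rfl⟩, ?_⟩, ?_⟩⟩
  · have h : ∃ p' ∈ P, Quotient.mk r p' = Quotient.mk r p := ⟨p, hp, rfl⟩
    simp only [rep, dif_pos h]
    exact hP _ h.choose_spec.1 _ hp (Quotient.exact h.choose_spec.2)
  · exact Quotient.exact (mk_rep (Quotient.mk r x)).symm
  · rintro _ ⟨⟨c, rfl⟩, hxc⟩
    rw [← Quotient.sound (Setoid.symm hxc), mk_rep]

def ratSetoid : Setoid ℝ where
  r x y := ∃ q : ℚ, x - y = q
  iseqv :=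
    { refl := fun x => ⟨0, by simp⟩
      symm := fun ⟨q, h⟩ => ⟨-q, by push_cast; linarith⟩
      trans := fun ⟨q, h⟩ ⟨q', h'⟩ => ⟨q + q', by push_cast; linarith⟩ }

lemma exists_isVitali_superset {P : Set ℝ} (hP : IsPartialVitali P) :
    ∃ V, IsVitali V ∧ P ⊆ V := by
  obtain ⟨V, hPV, hV⟩ := exists_transversal_superset ratSetoid hP
  exact ⟨V, hV, hPV⟩

lemma exists_unpair_fst_eq_of_eventually {p : ℕ → Prop} (hp : ∀ᶠ n in atTop, p n) (i : ℕ) :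
    ∃ n, (Nat.unpair n).1 = i ∧ p n := by
  obtain ⟨j, hj⟩ := ((tendsto_atTop_mono (Nat.right_le_pair i) tendsto_id).eventually hp).exists
  exact ⟨Nat.pair i j, by simp, hj⟩

/-- for `0 < α < 1/12`, `α < β < 1` and a fixed first move `I`
(a closed interval of positive length), there is a Vitali set that is
`(α,β,I)`-winning. -/
theorem stmt11 (α β : ℝ) (hα0 : 0 < α) (hα12 : α < 1/12) (hαβ : α < β)
    (hβ1 : β < 1) (I : Ivl) (hI : 0 < diam I) :
    ∃ V : Set ℝ, IsVitali V ∧ WinningFrom α β V I := by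
  have hβ0 : 0 < β := hα0.trans hαβ
  have hd_pos : ∀ n, 0 < (α * β) ^ n * diam I := fun n => by positivity
  have hd_lim : Tendsto (fun n => 2 * (α * ((α * β) ^ n * diam I))) atTop (𝓝 0) := by
    simpa using (((tendsto_pow_atTop_nhds_zero_of_lt_one (by positivity) (by nlinarith)).mul_const
      (diam I)).const_mul α).const_mul 2
  -- level `n` deals with the `(Nat.unpair n).1`-th rational, so each rational recurs at
  -- arbitrarily deep levels
  choose g hg_pos hg_fit hg_avoid using fun n =>
    exists_grid_spacing hα0 hα12 (hd_pos n) (Denumerable.ofNat ℚ (Nat.unpair n).1)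
  have h_avoid : ∀ q : ℚ, q ≠ 0 →
      ∃ n, ∀ k : ℤ, α * ((α * β) ^ n * diam I) < |q - k * g n| := by
    intro q hq
    obtain ⟨i, hi⟩ : ∃ i, Denumerable.ofNat ℚ i = q := (Denumerable.eqv ℚ).symm.surjective q
    obtain ⟨n, hn, hsmall⟩ := exists_unpair_fst_eq_of_eventually
      (hd_lim.eventually_lt_const (abs_pos.mpr (Rat.cast_ne_zero.mpr hq))) i
    have hgn := hg_avoid n
    rw [hn, hi] at hgn
    exact ⟨n, hgn hsmall.le⟩
  obtain ⟨V, hV, hPV⟩ := exists_isVitali_superset (isPartialVitali_gridOutcomes h_avoid)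
  exact ⟨V, hV, winningFrom_of_gridOutcomes_subset hg_pos hg_fit hPV⟩

end Schmidt
end

section
/- If 0 < α < 1/12, α < β < 1, and ρ > 0, then there exists a Vitali set V that is (α,β,ρ)-winning: Alice has a winning strategy in Schmidt's (α,β)-game with target V whenever Bob's first move is a closed interval of diameter exactly ρ. -/
namespace Schmidt

lemma hist_length (B : ℕ → Ivl) (n : ℕ) : (hist B n).length = n + 1 := by
  simp [hist]

lemma hist_getLastD (B : ℕ → Ivl) (n : ℕ) (d : Ivl) : (hist B n).getLastD d = B n := by
  induction n generalizing B d with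
  | zero => simp [hist]
  | succ n ih =>
      rw [hist, List.ofFn_succ, List.getLastD_cons]
      have h2 : (List.ofFn fun i : Fin (n+1) => B (i.succ)) = hist (fun m => B (m+1)) n := by
        simp [hist, Fin.val_succ]
      rw [h2, ih]

lemma half_le_abs_int_add_half (t : ℤ) : (1:ℝ)/2 ≤ |(t:ℝ) + 1/2| := by
  rcases le_or_gt 0 t with h | h
  · have : (0:ℝ) ≤ t := by exact_mod_cast h
    rw [abs_of_nonneg (by linarith)]; linarith
  · have ht : t ≤ -1 := by omega
    have : (t:ℝ) ≤ -1 := by exact_mod_cast ht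
    rw [abs_of_neg (by linarith)]; linarith

noncomputable def gridOf (α L : ℝ) (q : ℚ) : ℝ :=
  |(q:ℝ)| / ((⌈|(q:ℝ)| / ((1-α)*L) - 1/2⌉ : ℤ) + 1/2)

lemma gridOf_spec {α L : ℝ} (hα0 : 0 < α) (hα9 : α < 1/9) (hL : 0 < L) {q : ℚ} (hq : q ≠ 0)
    (hv : 3/4 * ((1-α)*L) ≤ |(q:ℝ)|) :
    0 < gridOf α L q ∧ gridOf α L q ≤ (1-α)*L ∧
      ∀ k : ℤ, 2*α*L < |(q:ℝ) - gridOf α L q * k| := by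
  have h1α : (0:ℝ) < 1 - α := by linarith
  set s : ℝ := (1-α)*L with hs
  have hs0 : 0 < s := mul_pos h1α hL
  have hq0 : 0 < |(q:ℝ)| := abs_pos.2 (by exact_mod_cast hq)
  set v : ℝ := |(q:ℝ)| / s with hvdef
  have hv34 : 3/4 ≤ v := (le_div_iff₀ hs0).2 (by linarith)
  have hvs : v * s = |(q:ℝ)| := div_mul_cancel₀ _ hs0.ne'
  set M : ℤ := ⌈v - 1/2⌉ with hM
  have hM1 : v - 1/2 ≤ (M:ℝ) := Int.le_ceil _
  have hM0 : 0 < M := Int.ceil_pos.2 (by linarith)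
  have hMr : (1:ℝ) ≤ (M:ℝ) := by exact_mod_cast hM0
  have hM2 : (M:ℝ) + 1/2 ≤ 2*v := by
    rcases le_or_gt 1 v with h1 | h1
    · have := Int.ceil_lt_add_one (v - 1/2)
      rw [← hM] at this
      linarith
    · have hMeq : M = 1 := by
        rw [hM]
        rw [Int.ceil_eq_iff]
        constructor
        · push_cast; linarith
        · push_cast; linarith
      rw [hMeq]; push_cast; linarith
  have hMhalf : (0:ℝ) < (M:ℝ) + 1/2 := by linarith
  have hgdef : gridOf α L q = |(q:ℝ)| / ((M:ℝ) + 1/2) := rfl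
  set g : ℝ := |(q:ℝ)| / ((M:ℝ) + 1/2) with hgd
  have hg0 : 0 < g := div_pos hq0 hMhalf
  have hkey : |(q:ℝ)| = g * ((M:ℝ) + 1/2) := (div_mul_cancel₀ _ hMhalf.ne').symm
  have hgle : g ≤ s := by
    rw [hgd, div_le_iff₀ hMhalf]
    nlinarith
  have hglow : s ≤ 2*g := by
    nlinarith
  have habs : ∀ k : ℤ, g/2 ≤ abs (|(q:ℝ)| - g*(k:ℝ)) := by
    intro k
    have ht := half_le_abs_int_add_half (M - k)
    have heq : |(q:ℝ)| - g*(k:ℝ) = g * (((M - k : ℤ):ℝ) + 1/2) := by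
      rw [hkey]; push_cast; ring
    rw [heq, abs_mul, abs_of_pos hg0]
    nlinarith
  have h2 : 2*α*L < g/2 := by nlinarith
  refine ⟨by rw [hgdef]; exact hg0, by rw [hgdef]; exact hgle, ?_⟩
  intro k
  rw [hgdef]
  rcases le_or_gt 0 (q:ℝ) with hq' | hq'
  · have hh : |(q:ℝ)| = (q:ℝ) := abs_of_nonneg hq'
    have := habs k
    rw [hh] at this
    linarith
  · have habs' := habs (-k)
    have heq : (q:ℝ) - g*(k:ℝ) = -(|(q:ℝ)| - g*((-k : ℤ):ℝ)) := by
      rw [abs_of_neg hq']; push_cast; ring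
    rw [heq, abs_neg]
    linarith

-- strategy machinery, appended to aux for testing
noncomputable def gStrat (α c ρ : ℝ) (δ : ℕ → ℝ) : Strategy := fun L =>
  (δ (L.length - 1) * ⌈(L.getLastD ((0:ℝ), (0:ℝ))).1 / δ (L.length - 1)⌉,
   δ (L.length - 1) * ⌈(L.getLastD ((0:ℝ), (0:ℝ))).1 / δ (L.length - 1)⌉
     + α * (ρ * c ^ (L.length - 1)))

lemma gStrat_hist (α c ρ : ℝ) (δ : ℕ → ℝ) (B : ℕ → Ivl) (n : ℕ) :
    gStrat α c ρ δ (hist B n) =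
      (δ n * ⌈(B n).1 / δ n⌉, δ n * ⌈(B n).1 / δ n⌉ + α * (ρ * c ^ n)) := by
  have h1 : (hist B n).length - 1 = n := by rw [hist_length]; omega
  have h2 := hist_getLastD B n ((0:ℝ), (0:ℝ))
  simp only [gStrat, h1, h2]

lemma gStrat_diam (α c ρ : ℝ) (δ : ℕ → ℝ) (B : ℕ → Ivl) (n : ℕ) :
    diam (gStrat α c ρ δ (hist B n)) = α * (ρ * c ^ n) := by
  rw [gStrat_hist]; simp [diam]

lemma gStrat_prefix (α β ρ : ℝ) (δ : ℕ → ℝ) (B : ℕ → Ivl) (hB0 : diam (B 0) = ρ)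
    (n : ℕ)
    (h : ∀ m, m < n → diam (B (m+1)) = β * diam (gStrat α (α*β) ρ δ (hist B m))) :
    ∀ m, m ≤ n → diam (B m) = ρ * (α*β) ^ m := by
  intro m hm
  induction m with
  | zero => simpa using hB0
  | succ m ih =>
      have hmn : m < n := Nat.lt_of_succ_le hm
      rw [h m hmn, gStrat_diam]
      ring

lemma gStrat_sub (α c ρ : ℝ) (δ : ℕ → ℝ) (B : ℕ → Ivl) (n : ℕ)
    (hδpos : 0 < δ n) (hδle : δ n ≤ (1-α)*(ρ*c^n)) (hα0 : 0 < α)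
    (hBn : diam (B n) = ρ * c ^ n) :
    Sub (gStrat α c ρ δ (hist B n)) (B n) := by
  rw [gStrat_hist]
  have hb2 : (B n).2 = (B n).1 + ρ * c ^ n := by
    have : (B n).2 - (B n).1 = ρ * c ^ n := hBn
    linarith
  unfold Sub toSet
  simp only
  apply Set.Icc_subset_Icc
  · have hc := Int.le_ceil ((B n).1 / δ n)
    have := (div_le_iff₀ hδpos).1 hc
    linarith [this]
  · have hceil := Int.ceil_lt_add_one ((B n).1 / δ n)
    have h2 : δ n * (⌈(B n).1 / δ n⌉ : ℝ) < δ n * ((B n).1 / δ n + 1) :=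
      mul_lt_mul_of_pos_left hceil hδpos
    have h3 : δ n * ((B n).1 / δ n) = (B n).1 := mul_div_cancel₀ _ hδpos.ne'
    have h4 : (1-α)*(ρ*c^n) = ρ*c^n - α*(ρ*c^n) := by ring
    rw [hb2]
    nlinarith
-- grid sequence machinery
open Classical in
noncomputable def Fj (α β ρ : ℝ) (e : ℕ → ℚ) (j : ℕ) : ℕ :=
  if h : ∃ n : ℕ, 3/4 * ((1-α)*(ρ*(α*β)^n)) ≤ |((e j : ℚ) : ℝ)| then Nat.find h else 0

noncomputable def Nj (α β ρ : ℝ) (e : ℕ → ℚ) : ℕ → ℕ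
  | 0 => Fj α β ρ e 0
  | j+1 => max (Fj α β ρ e (j+1)) (Nj α β ρ e j + 1)

open Classical in
noncomputable def delta (α β ρ : ℝ) (e : ℕ → ℚ) (m : ℕ) : ℝ :=
  if h : ∃ j, Nj α β ρ e j = m ∧ e j ≠ 0 then gridOf α (ρ*(α*β)^m) (e h.choose)
  else (1-α)*(ρ*(α*β)^m)

section Delta

variable {α β ρ : ℝ} (e : ℕ → ℚ)

lemma Nj_strictMono : StrictMono (Nj α β ρ e) := by
  apply strictMono_nat_of_lt_succ
  intro n
  exact lt_of_lt_of_le (Nat.lt_succ_self _) (le_max_right _ _)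

lemma Fj_le_Nj (j : ℕ) : Fj α β ρ e j ≤ Nj α β ρ e j := by
  cases j with
  | zero => exact le_refl _
  | succ j => exact le_max_left _ _

variable (hα0 : 0 < α) (hα12 : α < 1/12) (hαβ : α < β) (hβ1 : β < 1) (hρ : 0 < ρ)

include hα0 hα12 hαβ hβ1 hρ

lemma basic_facts : 0 < α*β ∧ α*β < 1 ∧ (0:ℝ) < 1 - α ∧ ∀ n : ℕ, 0 < ρ*(α*β)^n := by
  have hβ0 : 0 < β := lt_trans hα0 hαβ
  have h1 : 0 < α*β := mul_pos hα0 hβ0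
  have h2 : α*β < 1 := by nlinarith
  exact ⟨h1, h2, by linarith, fun n => mul_pos hρ (pow_pos h1 n)⟩

lemma Fj_spec (j : ℕ) (hj : e j ≠ 0) :
    ∀ n, Fj α β ρ e j ≤ n → 3/4 * ((1-α)*(ρ*(α*β)^n)) ≤ |((e j : ℚ) : ℝ)| := by
  obtain ⟨hαβ0, hαβ1, h1α, hL⟩ := basic_facts hα0 hα12 hαβ hβ1 hρ
  have hq0 : (0:ℝ) < |((e j : ℚ) : ℝ)| := abs_pos.2 (by exact_mod_cast hj)
  have hC : (0:ℝ) < 3/4 * ((1-α)*ρ) := by positivity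
  have hE : ∃ n : ℕ, 3/4 * ((1-α)*(ρ*(α*β)^n)) ≤ |((e j : ℚ) : ℝ)| := by
    obtain ⟨n, hn⟩ := exists_pow_lt_of_lt_one (div_pos hq0 hC) hαβ1
    refine ⟨n, ?_⟩
    have := (lt_div_iff₀ hC).1 hn
    nlinarith
  intro n hn
  rw [Fj, dif_pos hE] at hn
  have h0 := Nat.find_spec hE
  have hpow : (α*β)^n ≤ (α*β)^(Nat.find hE) :=
    pow_le_pow_of_le_one hαβ0.le hαβ1.le hn
  nlinarith

lemma delta_pos_le (m : ℕ) :
    0 < delta α β ρ e m ∧ delta α β ρ e m ≤ (1-α)*(ρ*(α*β)^m) := by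
  obtain ⟨hαβ0, hαβ1, h1α, hL⟩ := basic_facts hα0 hα12 hαβ hβ1 hρ
  rw [delta]
  split_ifs with h
  · obtain ⟨hN, hne⟩ := h.choose_spec
    have hv : 3/4 * ((1-α)*(ρ*(α*β)^m)) ≤ |((e h.choose : ℚ) : ℝ)| := by
      apply Fj_spec e hα0 hα12 hαβ hβ1 hρ h.choose hne
      exact le_trans (Fj_le_Nj e h.choose) (le_of_eq hN)
    have := gridOf_spec hα0 (by linarith) (hL m) hne hv
    exact ⟨this.1, this.2.1⟩
  · exact ⟨mul_pos h1α (hL m), le_refl _⟩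

lemma delta_kill (he : Function.Surjective e) (q : ℚ) (hq : q ≠ 0) :
    ∃ n : ℕ, ∀ k : ℤ,
      2*α*(ρ*(α*β)^n) < |(q:ℝ) - delta α β ρ e n * (k:ℝ)| := by
  obtain ⟨hαβ0, hαβ1, h1α, hL⟩ := basic_facts hα0 hα12 hαβ hβ1 hρ
  obtain ⟨j, hej⟩ := he q
  refine ⟨Nj α β ρ e j, ?_⟩
  have hjne : e j ≠ 0 := by rw [hej]; exact hq
  have hW : ∃ j', Nj α β ρ e j' = Nj α β ρ e j ∧ e j' ≠ 0 := ⟨j, rfl, hjne⟩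
  intro k
  rw [delta, dif_pos hW]
  have hcs := hW.choose_spec
  have hcj : hW.choose = j := (Nj_strictMono e).injective hcs.1
  rw [hcj, hej]
  have hv : 3/4 * ((1-α)*(ρ*(α*β)^(Nj α β ρ e j))) ≤ |(q:ℝ)| := by
    have := Fj_spec e hα0 hα12 hαβ hβ1 hρ j hjne (Nj α β ρ e j) (Fj_le_Nj e j)
    rwa [hej] at this
  exact (gridOf_spec hα0 (by linarith) (hL _) hq hv).2.2 k

end Delta
-- Vitali extension

def vRel (x y : ℝ) : Prop := ∃ q : ℚ, x - y = (q : ℝ)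

lemma vRel_refl (x : ℝ) : vRel x x := ⟨0, by push_cast; ring⟩

lemma vRel_symm {x y : ℝ} : vRel x y → vRel y x := fun ⟨q, hq⟩ => ⟨-q, by push_cast; linarith⟩

lemma vRel_trans {x y z : ℝ} : vRel x y → vRel y z → vRel x z :=
  fun ⟨q, hq⟩ ⟨r, hr⟩ => ⟨q + r, by push_cast; linarith⟩

def vSetoid : Setoid ℝ := ⟨vRel, vRel_refl, vRel_symm, vRel_trans⟩

open Classical in
noncomputable def repFun (S : Set ℝ) (x : ℝ) : ℝ :=
  if h : ∃ s, s ∈ S ∧ vRel x s then h.choose else (Quotient.mk vSetoid x).out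

lemma repFun_rel (S : Set ℝ) (x : ℝ) : vRel x (repFun S x) := by
  rw [repFun]
  split_ifs with h
  · exact h.choose_spec.2
  · have h1 : Quotient.mk vSetoid ((Quotient.mk vSetoid x).out) = Quotient.mk vSetoid x :=
      Quotient.out_eq _
    exact vRel_symm (Quotient.exact h1)

lemma repFun_congr (S : Set ℝ)
    (hS : ∀ x ∈ S, ∀ y ∈ S, vRel x y → x = y) {x y : ℝ} (h : vRel x y) :
    repFun S x = repFun S y := by
  rw [repFun, repFun]
  by_cases hx : ∃ s, s ∈ S ∧ vRel x s
  · have hy : ∃ s, s ∈ S ∧ vRel y s :=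
      ⟨hx.choose, hx.choose_spec.1, vRel_trans (vRel_symm h) hx.choose_spec.2⟩
    rw [dif_pos hx, dif_pos hy]
    exact hS _ hx.choose_spec.1 _ hy.choose_spec.1
      (vRel_trans (vRel_symm hx.choose_spec.2) (vRel_trans h hy.choose_spec.2))
  · have hy : ¬ ∃ s, s ∈ S ∧ vRel y s := by
      rintro ⟨s, hs, hys⟩
      exact hx ⟨s, hs, vRel_trans h hys⟩
    rw [dif_neg hx, dif_neg hy]
    exact congrArg Quotient.out (Quotient.sound h)

lemma exists_vitali_superset (S : Set ℝ)
    (hS : ∀ x ∈ S, ∀ y ∈ S, vRel x y → x = y) :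
    ∃ V : Set ℝ, IsVitali V ∧ S ⊆ V := by
  refine ⟨Set.range (repFun S), ?_, ?_⟩
  · intro x
    refine ⟨repFun S x, ⟨⟨x, rfl⟩, repFun_rel S x⟩, ?_⟩
    rintro v ⟨⟨y, rfl⟩, hxv⟩
    exact repFun_congr S hS (vRel_trans (repFun_rel S y) (vRel_symm hxv))
  · intro x hx
    have h : ∃ s, s ∈ S ∧ vRel x s := ⟨x, hx, vRel_refl x⟩
    have : repFun S x = x := by
      rw [repFun, dif_pos h]
      exact hS _ h.choose_spec.1 _ hx (vRel_symm h.choose_spec.2)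
    exact ⟨x, this⟩


/-- for `0 < α < 1/12`, `α < β < 1` and `ρ > 0` there is a
Vitali set that is `(α,β,ρ)`-winning: Alice has a winning strategy whenever
Bob's first move is a closed interval of diameter exactly `ρ`. -/
theorem stmt12 (α β ρ : ℝ) (hα0 : 0 < α) (hα12 : α < 1/12) (hαβ : α < β)
    (hβ1 : β < 1) (hρ : 0 < ρ) :
    ∃ V : Set ℝ, IsVitali V ∧
      ∃ σ : Strategy,
        (∀ B : ℕ → Ivl, diam (B 0) = ρ → ∀ n : ℕ,
          (∀ m, m < n → Sub (B (m + 1)) (σ (hist B m)) ∧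
            diam (B (m + 1)) = β * diam (σ (hist B m))) →
          Sub (σ (hist B n)) (B n) ∧ diam (σ (hist B n)) = α * diam (B n)) ∧
        (∀ B : ℕ → Ivl, diam (B 0) = ρ → BobPlays β σ B →
          ∀ x : ℝ, (∀ n, x ∈ toSet (σ (hist B n))) → x ∈ V) := by
  classical
  obtain ⟨hαβ0, hαβ1, h1α, hL⟩ := basic_facts (α := α) (β := β) (ρ := ρ) hα0 hα12 hαβ hβ1 hρ
  obtain ⟨e, he⟩ := exists_surjective_nat ℚ
  have hd := fun n => delta_pos_le (α := α) (β := β) (ρ := ρ) e hα0 hα12 hαβ hβ1 hρ n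
  -- the forced target set
  have hSpv : ∀ x ∈ {x : ℝ | ∀ n : ℕ, ∃ k : ℤ, |x - delta α β ρ e n * (k:ℝ)| ≤ α * (ρ*(α*β)^n)},
      ∀ y ∈ {x : ℝ | ∀ n : ℕ, ∃ k : ℤ, |x - delta α β ρ e n * (k:ℝ)| ≤ α * (ρ*(α*β)^n)},
      vRel x y → x = y := by
    rintro x hx y hy ⟨q, hq⟩
    rcases eq_or_ne q 0 with h0 | h0
    · have hq0 : x - y = 0 := by rw [hq, h0]; norm_num
      linarith
    · exfalso
      obtain ⟨n, hn⟩ := delta_kill (α := α) (β := β) (ρ := ρ) e hα0 hα12 hαβ hβ1 hρ he q h0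
      obtain ⟨k₁, hk₁⟩ := hx n
      obtain ⟨k₂, hk₂⟩ := hy n
      have hbig := hn (k₁ - k₂)
      have hcast : delta α β ρ e n * ((k₁ - k₂ : ℤ):ℝ)
          = delta α β ρ e n * (k₁:ℝ) - delta α β ρ e n * (k₂:ℝ) := by push_cast; ring
      have h1 : (q:ℝ) - (delta α β ρ e n * (k₁:ℝ) - delta α β ρ e n * (k₂:ℝ))
          = (x - delta α β ρ e n * (k₁:ℝ)) - (y - delta α β ρ e n * (k₂:ℝ)) := by
        rw [← hq]; ring
      have key : |(q:ℝ) - (delta α β ρ e n * (k₁:ℝ) - delta α β ρ e n * (k₂:ℝ))|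
          ≤ α*(ρ*(α*β)^n) + α*(ρ*(α*β)^n) := by
        rw [h1, sub_eq_add_neg]
        calc |(x - delta α β ρ e n * (k₁:ℝ)) + -(y - delta α β ρ e n * (k₂:ℝ))|
            ≤ |x - delta α β ρ e n * (k₁:ℝ)| + |-(y - delta α β ρ e n * (k₂:ℝ))| := abs_add_le _ _
          _ = |x - delta α β ρ e n * (k₁:ℝ)| + |y - delta α β ρ e n * (k₂:ℝ)| := by rw [abs_neg]
          _ ≤ _ := add_le_add hk₁ hk₂
      rw [hcast] at hbig
      linarith
  obtain ⟨V, hV, hSV⟩ := exists_vitali_superset _ hSpv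
  refine ⟨V, hV, gStrat α (α*β) ρ (delta α β ρ e), ?_, ?_⟩
  · intro B hB0 n hleg
    have hdiam := gStrat_prefix α β ρ (delta α β ρ e) B hB0 n (fun m hm => (hleg m hm).2)
    have hBn := hdiam n le_rfl
    constructor
    · exact gStrat_sub α (α*β) ρ (delta α β ρ e) B n (hd n).1 (hd n).2 hα0 hBn
    · rw [gStrat_diam, hBn]
  · intro B hB0 hBP x hx
    apply hSV
    intro n
    have hxn := hx n
    rw [gStrat_hist] at hxn
    have hIcc : x ∈ Set.Icc (delta α β ρ e n * (⌈(B n).1 / delta α β ρ e n⌉ : ℝ))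
        (delta α β ρ e n * (⌈(B n).1 / delta α β ρ e n⌉ : ℝ) + α * (ρ * (α*β) ^ n)) := hxn
    obtain ⟨h1, h2⟩ := hIcc
    have hαL : (0:ℝ) ≤ α * (ρ * (α*β)^n) := le_of_lt (mul_pos hα0 (hL n))
    exact ⟨⌈(B n).1 / delta α β ρ e n⌉, abs_le.2 ⟨by linarith, by linarith⟩⟩


end Schmidt
end

section
/- For every α, β with 0 < α < 1 and 0 < β < 1/3, and every Sierpinski set S ⊆ ℝ, Bob has a winning strategy in Schmidt's (α,β)-game with target S. -/
namespace Schmidt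

/-- `S` is a Sierpinski set: its intersection with every Lebesgue-null set is
countable. -/
def IsSierpinski (S : Set ℝ) : Prop :=
  ∀ A : Set ℝ, MeasureTheory.volume A = 0 → (S ∩ A).Countable

open Set MeasureTheory Filter Topology
open scoped ENNReal

/-! Bob answers Alice's interval `A` by its left `β`-part, except at every `k`-th round, where
he plays an interval of the grid of spacing `(1-β)/2 · |A|` and length `β |A|`. Since the length
of `A` at that round is fixed in advance, so is the grid, and all outcomes of the game lie in the
set `P` of points belonging to the grid of every `k`-th round. Two consecutive grid intervals
fit into `A`, and they are disjoint because `β < 1/3`; so Bob can pick one that misses the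
`j`-th point of an enumeration of `S ∩ P`. That set is countable because `P` is null: for `k`
large, each grid covers a proportion `≈ 2β/(1-β) < 1` of each interval of the previous one. -/

def grid (q ℓ : ℝ) : Set ℝ := ⋃ m : ℤ, Icc (m * q) (m * q + ℓ)

section Grid

variable {q ℓ : ℝ}

lemma card_Icc_ceil_floor_le {x y : ℝ} (h : x ≤ y) :
    ((Finset.Icc ⌈x⌉ ⌊y⌋).card : ℝ) ≤ y - x + 1 := by
  have hle : ⌈x⌉ ≤ ⌊y⌋ + 1 :=
    (Int.ceil_le_floor_add_one x).trans (by gcongr)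
  have hcard : ((Finset.Icc ⌈x⌉ ⌊y⌋).card : ℤ) = ⌊y⌋ + 1 - ⌈x⌉ := by
    rw [Int.card_Icc, Int.toNat_of_nonneg (by omega)]
  have hcard' : ((Finset.Icc ⌈x⌉ ⌊y⌋).card : ℝ) = (⌊y⌋ : ℝ) + 1 - ⌈x⌉ := by
    exact_mod_cast hcard
  linarith [Int.floor_le y, Int.le_ceil x]

lemma Icc_inter_grid_subset (hq : 0 < q) (a b : ℝ) :
    Icc a b ∩ grid q ℓ ⊆
      ⋃ m ∈ Finset.Icc ⌈(a - ℓ) / q⌉ ⌊b / q⌋, Icc ((m : ℝ) * q) (m * q + ℓ) := by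
  rintro x ⟨⟨hax, hxb⟩, hx⟩
  obtain ⟨m, hmx, hxm⟩ := mem_iUnion.mp hx
  refine mem_biUnion (Finset.mem_Icc.mpr ⟨Int.ceil_le.mpr ?_, Int.le_floor.mpr ?_⟩) ⟨hmx, hxm⟩
  · rw [div_le_iff₀ hq]; linarith
  · rw [le_div_iff₀ hq]; linarith

lemma volume_Icc_inter_grid_inter_le (hq : 0 < q) (hℓ : 0 ≤ ℓ) {a b : ℝ} (hab : a ≤ b)
    {E : Set ℝ} {M : ℝ≥0∞} (hM : ∀ m : ℤ, volume (Icc ((m : ℝ) * q) (m * q + ℓ) ∩ E) ≤ M) :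
    volume (Icc a b ∩ grid q ℓ ∩ E) ≤ ENNReal.ofReal ((b - a + ℓ) / q + 1) * M := by
  set F := Finset.Icc ⌈(a - ℓ) / q⌉ ⌊b / q⌋
  have hcover : Icc a b ∩ grid q ℓ ∩ E ⊆ ⋃ m ∈ F, Icc ((m : ℝ) * q) (m * q + ℓ) ∩ E := by
    rintro x ⟨hx, hxE⟩
    obtain ⟨m, hm, hxm⟩ := mem_iUnion₂.mp (Icc_inter_grid_subset hq a b hx)
    exact mem_biUnion hm ⟨hxm, hxE⟩
  have hcard : (F.card : ℝ≥0∞) ≤ ENNReal.ofReal ((b - a + ℓ) / q + 1) := by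
    rw [← ENNReal.ofReal_natCast]
    refine ENNReal.ofReal_le_ofReal ((card_Icc_ceil_floor_le ?_).trans_eq ?_)
    · gcongr; linarith
    · ring
  calc volume (Icc a b ∩ grid q ℓ ∩ E)
      ≤ ∑ m ∈ F, volume (Icc ((m : ℝ) * q) (m * q + ℓ) ∩ E) :=
        (measure_mono hcover).trans (measure_biUnion_finset_le _ _)
    _ ≤ ∑ _m ∈ F, M := Finset.sum_le_sum fun m _ => hM m
    _ = F.card * M := by rw [Finset.sum_const, nsmul_eq_mul]
    _ ≤ _ := by gcongr

variable {c : ℝ}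

def gridTail (q ℓ c : ℝ) (j : ℕ) : Set ℝ := ⋂ i : ℕ, grid (q * c ^ (j + i)) (ℓ * c ^ (j + i))

lemma gridTail_eq (j : ℕ) :
    gridTail q ℓ c j = grid (q * c ^ j) (ℓ * c ^ j) ∩ gridTail q ℓ c (j + 1) := by
  rw [gridTail, ← inter_iInter_nat_succ, add_zero]
  refine congrArg _ (iInter_congr fun i => ?_)
  rw [add_right_comm, add_assoc]

/- An interval of length `ℓ c^j` meets at most `ℓ (1 + c) / (q c) + 1` intervals of the next
level, each of length `ℓ c^(j+1)`. -/
lemma volume_Icc_inter_gridTail_le (hq : 0 < q) (hℓ : 0 ≤ ℓ) (hc : 0 < c) (J j : ℕ) (a : ℝ) :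
    volume (Icc a (a + ℓ * c ^ j) ∩ gridTail q ℓ c (j + 1)) ≤
      ENNReal.ofReal ((ℓ / q * (1 + c) + c) ^ J * (ℓ * c ^ j)) := by
  induction J generalizing j a with
  | zero =>
    simpa using (measure_mono inter_subset_left).trans_eq
      (Real.volume_Icc (a := a) (b := a + ℓ * c ^ j))
  | succ J ih =>
    rw [gridTail_eq, ← inter_assoc]
    refine (volume_Icc_inter_grid_inter_le (by positivity) (by positivity)
      (by simp only [le_add_iff_nonneg_right]; positivity) fun m => ih (j + 1) _).trans_eq ?_
    rw [add_sub_cancel_left, ← ENNReal.ofReal_mul (by positivity), pow_succ (ℓ / q * (1 + c) + c) J]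
    congr 1
    generalize (ℓ / q * (1 + c) + c) ^ J = R
    field_simp
    ring

theorem volume_iInter_grid_eq_zero (hq : 0 < q) (hℓ : 0 ≤ ℓ) (hc : 0 < c)
    (hr : ℓ / q * (1 + c) + c < 1) :
    volume (⋂ j : ℕ, grid (q * c ^ j) (ℓ * c ^ j)) = 0 := by
  have hr0 : 0 ≤ ℓ / q * (1 + c) + c := by positivity
  have hlim : Tendsto (fun J : ℕ => ENNReal.ofReal ((ℓ / q * (1 + c) + c) ^ J * ℓ)) atTop (𝓝 0) := by
    simpa using ENNReal.tendsto_ofReal ((tendsto_pow_atTop_nhds_zero_of_lt_one hr0 hr).mul_const ℓ)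
  have hpiece (a : ℝ) : volume (Icc a (a + ℓ) ∩ gridTail q ℓ c 1) = 0 :=
    le_antisymm (ge_of_tendsto' hlim fun J => by
      simpa using volume_Icc_inter_gridTail_le hq hℓ hc J 0 a) zero_le
  have hcover : ⋂ j : ℕ, grid (q * c ^ j) (ℓ * c ^ j) ⊆
      ⋃ m : ℤ, Icc ((m : ℝ) * q) (m * q + ℓ) ∩ gridTail q ℓ c 1 := by
    intro x hx
    have hx' : x ∈ gridTail q ℓ c 0 := by simpa [gridTail] using hx
    rw [gridTail_eq] at hx'
    obtain ⟨m, hm⟩ := mem_iUnion.mp hx'.1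
    simp only [pow_zero, mul_one] at hm
    exact mem_iUnion.mpr ⟨m, hm, hx'.2⟩
  exact measure_mono_null hcover (measure_iUnion_null fun m => hpiece _)

end Grid

section Strategy

def gridIvl (q ℓ : ℝ) (m : ℤ) : Ivl := (m * q, m * q + ℓ)

open Classical in
noncomputable def avoidingChild (β y : ℝ) (a : Ivl) : Ivl :=
  let q := (1 - β) / 2 * diam a
  let m := ⌈a.1 / q⌉
  if y ∈ toSet (gridIvl q (β * diam a) m) then gridIvl q (β * diam a) (m + 1)
  else gridIvl q (β * diam a) m

lemma gridIvl_sub_of_ceil_le {q ℓ : ℝ} {a : Ivl} {m : ℤ} (hq : 0 < q)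
    (ha : 2 * q + ℓ ≤ diam a) (hm₁ : ⌈a.1 / q⌉ ≤ m) (hm₂ : m ≤ ⌈a.1 / q⌉ + 1) :
    Sub (gridIvl q ℓ m) a := by
  have h₁ : a.1 / q ≤ m := (Int.le_ceil _).trans (by exact_mod_cast hm₁)
  have h₂ : (m : ℝ) < a.1 / q + 2 := by
    have : (m : ℝ) ≤ ⌈a.1 / q⌉ + 1 := by exact_mod_cast hm₂
    linarith [Int.ceil_lt_add_one (a.1 / q)]
  rw [div_le_iff₀ hq] at h₁
  have h₂' : m * q < a.1 + 2 * q := by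
    have := mul_lt_mul_of_pos_right h₂ hq
    rwa [add_mul, div_mul_cancel₀ _ hq.ne'] at this
  exact Icc_subset_Icc h₁ (show m * q + ℓ ≤ a.2 by simp only [diam] at ha; linarith)

variable {β y : ℝ} {a : Ivl} {k : ℕ} {f : ℕ → ℝ}

lemma avoidingChild_eq_gridIvl :
    ∃ m, avoidingChild β y a = gridIvl ((1 - β) / 2 * diam a) (β * diam a) m := by
  dsimp only [avoidingChild]
  split_ifs
  exacts [⟨_, rfl⟩, ⟨_, rfl⟩]

lemma diam_avoidingChild : diam (avoidingChild β y a) = β * diam a := by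
  dsimp only [avoidingChild]
  split_ifs <;> simp [diam, gridIvl]

lemma avoidingChild_sub (hβ : β < 1) (ha : 0 < diam a) : Sub (avoidingChild β y a) a := by
  have hq : 0 < (1 - β) / 2 * diam a := by nlinarith
  have hlen : 2 * ((1 - β) / 2 * diam a) + β * diam a ≤ diam a := by linarith
  dsimp only [avoidingChild]
  split_ifs
  exacts [gridIvl_sub_of_ceil_le hq hlen (by omega) le_rfl,
    gridIvl_sub_of_ceil_le hq hlen le_rfl (by omega)]

lemma notMem_avoidingChild (hβ : β < 1 / 3) (ha : 0 < diam a) :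
    y ∉ toSet (avoidingChild β y a) := by
  dsimp only [avoidingChild]
  split_ifs with hy
  · intro hy'
    simp only [toSet, gridIvl, mem_Icc] at hy hy'
    push_cast at hy'
    nlinarith
  · exact hy

noncomputable def bobStep (β : ℝ) (k : ℕ) (f : ℕ → ℝ) (n : ℕ) (a : Ivl) : Ivl :=
  if k ∣ n then avoidingChild β (f (n / k)) a else (a.1, a.1 + β * diam a)

lemma diam_bobStep {n : ℕ} : diam (bobStep β k f n a) = β * diam a := by
  unfold bobStep
  split_ifs
  · exact diam_avoidingChild
  · simp [diam]

lemma bobStep_sub {n : ℕ} (hβ : β < 1) (ha : 0 < diam a) :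
    Sub (bobStep β k f n a) a := by
  unfold bobStep
  split_ifs
  · exact avoidingChild_sub hβ ha
  · exact Icc_subset_Icc le_rfl (show a.1 + β * diam a ≤ a.2 by unfold diam at ha ⊢; nlinarith)

noncomputable def bobStrategy (β : ℝ) (k : ℕ) (f : ℕ → ℝ) : Strategy := fun l =>
  if l = [] then (0, 1) else bobStep β k f (l.length - 1) (l.getLastD (0, 1))

variable {α : ℝ} {A : ℕ → Ivl}

lemma bobStrategy_nil : bobStrategy β k f [] = (0, 1) := if_pos rfl

lemma histA_succ (n : ℕ) : histA A (n + 1) = histA A n ++ [A n] := by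
  rw [histA, histA, List.ofFn_succ', List.concat_eq_append]
  rfl

lemma bobStrategy_histA_succ (n : ℕ) :
    bobStrategy β k f (histA A (n + 1)) = bobStep β k f n (A n) := by
  rw [bobStrategy, if_neg (by simp [histA_succ]), histA_succ, List.getLastD_concat]
  simp [histA]

lemma diam_bobStrategy_histA {n : ℕ}
    (hA : ∀ m < n, diam (A m) = α * diam (bobStrategy β k f (histA A m))) :
    diam (bobStrategy β k f (histA A n)) = (α * β) ^ n := by
  induction n with
  | zero => simp [histA, bobStrategy_nil, diam]
  | succ n ih =>
    rw [bobStrategy_histA_succ, diam_bobStep, hA n n.lt_succ_self,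
      ih fun m hm => hA m (hm.trans n.lt_succ_self), pow_succ]
    ring

lemma bobLegal_bobStrategy (hα : 0 < α) (hβ₀ : 0 < β) (hβ₁ : β < 1) :
    BobLegal α β (bobStrategy β k f) := by
  refine ⟨by simp [bobStrategy_nil, diam], fun A n hA => ?_⟩
  have hdiam : diam (A n) = α * (α * β) ^ n := by
    rw [(hA n le_rfl).2, diam_bobStrategy_histA fun m hm => (hA m hm.le).2]
  rw [bobStrategy_histA_succ]
  exact ⟨bobStep_sub hβ₁ (hdiam ▸ by positivity), diam_bobStep⟩

lemma mem_avoidingChild_of_alicePlays (hk : 0 < k) (hA : AlicePlays α (bobStrategy β k f) A)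
    {x : ℝ} (hx : ∀ n, x ∈ toSet (A n)) (j : ℕ) :
    x ∈ toSet (avoidingChild β (f j) (A (k * j))) ∧ diam (A (k * j)) = α * (α * β) ^ (k * j) := by
  have hmem := (hA (k * j + 1)).1 (hx (k * j + 1))
  rw [bobStrategy_histA_succ, bobStep, if_pos (dvd_mul_right k j),
    Nat.mul_div_cancel_left j hk] at hmem
  refine ⟨hmem, ?_⟩
  rw [(hA _).2, diam_bobStrategy_histA fun m _ => (hA m).2]

lemma mem_grid_of_alicePlays (hk : 0 < k) (hA : AlicePlays α (bobStrategy β k f) A)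
    {x : ℝ} (hx : ∀ n, x ∈ toSet (A n)) (j : ℕ) :
    x ∈ grid ((1 - β) / 2 * α * ((α * β) ^ k) ^ j) (β * α * ((α * β) ^ k) ^ j) := by
  obtain ⟨hxj, hdiam⟩ := mem_avoidingChild_of_alicePlays hk hA hx j
  obtain ⟨m, hm⟩ := avoidingChild_eq_gridIvl (β := β) (y := f j) (a := A (k * j))
  rw [hm, hdiam] at hxj
  rw [← pow_mul, mul_assoc, mul_assoc]
  exact mem_iUnion.mpr ⟨m, hxj⟩

end Strategy

lemma exists_pos_mul_one_add_pow_add_pow_lt_one {ρ t : ℝ} (hρ : ρ < 1) (ht₀ : 0 ≤ t)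
    (ht₁ : t < 1) : ∃ k, 0 < k ∧ ρ * (1 + t ^ k) + t ^ k < 1 := by
  have hlim : Tendsto (fun k : ℕ => ρ * (1 + t ^ k) + t ^ k) atTop (𝓝 (ρ * (1 + 0) + 0)) :=
    ((tendsto_pow_atTop_nhds_zero_of_lt_one ht₀ ht₁).const_add 1 |>.const_mul ρ).add
      (tendsto_pow_atTop_nhds_zero_of_lt_one ht₀ ht₁)
  have hlt : ρ * (1 + 0) + 0 < 1 := by simpa using hρ
  obtain ⟨k, hk, hk₀⟩ := ((hlim.eventually (gt_mem_nhds hlt)).and (eventually_gt_atTop 0)).exists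
  exact ⟨k, hk₀, hk⟩

/-- for `0 < α < 1`, `0 < β < 1/3`, Bob has a winning strategy
in the `(α,β)`-game on any Sierpinski set. -/
theorem stmt16 (α β : ℝ) (hα0 : 0 < α) (hα1 : α < 1) (hβ0 : 0 < β)
    (hβ13 : β < 1/3) (S : Set ℝ) (hS : IsSierpinski S) :
    BobWinning α β S := by
  have hρ : β * α / ((1 - β) / 2 * α) < 1 := by
    rw [div_lt_one (by nlinarith)]
    nlinarith
  obtain ⟨k, hk, hr⟩ :=
    exists_pos_mul_one_add_pow_add_pow_lt_one hρ (by positivity) (by nlinarith : α * β < 1)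
  set P := ⋂ j : ℕ, grid ((1 - β) / 2 * α * ((α * β) ^ k) ^ j) (β * α * ((α * β) ^ k) ^ j)
  have hP : volume P = 0 :=
    volume_iInter_grid_eq_zero (by nlinarith) (by positivity) (by positivity) hr
  obtain ⟨f, hf⟩ := countable_iff_exists_subset_range.mp (hS P hP)
  refine ⟨bobStrategy β k f, bobLegal_bobStrategy hα0 hβ0 (by linarith), fun A hA x hx hxS => ?_⟩
  obtain ⟨j, rfl⟩ := hf ⟨hxS, mem_iInter.mpr (mem_grid_of_alicePlays hk hA hx)⟩
  obtain ⟨hxj, hdiam⟩ := mem_avoidingChild_of_alicePlays hk hA hx j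
  exact notMem_avoidingChild hβ13 (by rw [hdiam]; positivity) hxj

end Schmidt
end

section
/- For every α, β with 0 < α < 1 and 0 < β < 1/3, and every Luzin set L ⊆ ℝ, Bob has a winning strategy in Schmidt's (α,β)-game with target L. -/
namespace Schmidt

/-- `L` is a Luzin set: its intersection with every meager set is countable. -/
def IsLuzin (L : Set ℝ) : Prop :=
  ∀ A : Set ℝ, IsMeagre A → (L ∩ A).Countable

/-!
Bob steers the play into the closed nowhere dense set `cantorSet α β`: at stage `n` he answers
inside Alice's interval, at a fixed distance from a grid whose spacing is comparable to the length
of that interval, and away from the `n`-th point of an enumeration of the countable set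
`L ∩ cantorSet α β`. The point of the play then lies in `cantorSet α β` but is none of the
enumerated points, so it is not in `L`. Since `β < 1/3`, every gap of the grid leaves room for two
disjoint admissible answers, and one of them misses the forbidden point.
-/

open Set Filter Topology

def farFromGrid (g ε : ℝ) : Set ℝ := {x | ∀ k : ℤ, ε ≤ |x - k * g|}

lemma isClosed_farFromGrid (g ε : ℝ) : IsClosed (farFromGrid g ε) := by
  simp only [farFromGrid, ofPred_forall]
  exact isClosed_iInter fun k => isClosed_le continuous_const (by fun_prop)

lemma int_mul_notMem_farFromGrid {g ε : ℝ} (hε : 0 < ε) (k : ℤ) : k * g ∉ farFromGrid g ε :=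
  fun h => (h k).not_gt (by simpa using hε)

lemma mem_farFromGrid_of_mem_gap {g ε y : ℝ} (hg : 0 ≤ g) (k : ℤ) (hleft : k * g + ε ≤ y)
    (hright : y + ε ≤ k * g + g) : y ∈ farFromGrid g ε := by
  intro m
  rcases le_or_gt m k with hm | hm
  · have : (m : ℝ) * g ≤ k * g := by gcongr
    exact (by linarith : ε ≤ y - m * g).trans (le_abs_self _)
  · have : (k : ℝ) * g + g ≤ m * g := by
      rw [← add_one_mul]; gcongr; exact_mod_cast hm
    exact (by linarith : ε ≤ -(y - m * g)).trans (neg_le_abs _)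

lemma Icc_subset_farFromGrid {g ε s l : ℝ} (hg : 0 ≤ g) (k : ℤ) (hleft : k * g + ε ≤ s)
    (hright : s + l + ε ≤ k * g + g) : Icc s (s + l) ⊆ farFromGrid g ε :=
  fun _ hy => mem_farFromGrid_of_mem_gap hg k (hleft.trans hy.1) (by linarith [hy.2])

/-- A gap of the grid `gℤ` near `u` holds two disjoint intervals of length `l` at distance `ε` from
the grid, and `x` misses one of them. -/
lemma exists_Icc_subset_farFromGrid_notMem {g ε l : ℝ} (hε : 0 < ε) (hl : 0 ≤ l)
    (hgap : 2 * ε + 2 * l < g) (u x : ℝ) :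
    ∃ s, u ≤ s ∧ s ≤ u + g ∧ Icc s (s + l) ⊆ farFromGrid g ε ∧ x ∉ Icc s (s + l) := by
  have hg : 0 < g := by linarith
  set k := ⌈(u - ε) / g⌉
  have hk₁ : u - ε ≤ k * g := (div_le_iff₀ hg).1 (Int.le_ceil _)
  have hk₂ : k * g < u - ε + g := by
    have := (lt_div_iff₀ hg).1 (by linarith [Int.ceil_lt_add_one ((u - ε) / g)] :
      (k : ℝ) - 1 < (u - ε) / g)
    linarith
  set s₁ := k * g + ε
  have hs₁ : Icc s₁ (s₁ + l) ⊆ farFromGrid g ε :=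
    Icc_subset_farFromGrid hg.le k le_rfl (by linarith)
  obtain ⟨s₂, hu₂, hg₂, hs₂, hdisj⟩ : ∃ s₂, u ≤ s₂ ∧ s₂ ≤ u + g ∧
      Icc s₂ (s₂ + l) ⊆ farFromGrid g ε ∧ Disjoint (Icc s₁ (s₁ + l)) (Icc s₂ (s₂ + l)) := by
    rcases le_or_gt (k * g) (u + l + ε) with hk | hk
    · refine ⟨k * g + g - ε - l, by linarith, by linarith,
        Icc_subset_farFromGrid hg.le k (by linarith) (by linarith), ?_⟩
      exact disjoint_left.2 fun y hy₁ hy₂ => by linarith [hy₁.2, hy₂.1]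
    · refine ⟨k * g - ε - l, by linarith, by linarith,
        Icc_subset_farFromGrid hg.le (k - 1) (by push_cast; linarith)
          (by push_cast; ring_nf; linarith), ?_⟩
      exact disjoint_left.2 fun y hy₁ hy₂ => by linarith [hy₁.1, hy₂.2]
  by_cases hx : x ∈ Icc s₁ (s₁ + l)
  · exact ⟨s₂, hu₂, hg₂, hs₂, disjoint_left.1 hdisj hx⟩
  · exact ⟨s₁, by linarith, by linarith, hs₁, hx⟩

lemma isNowhereDense_iInter_farFromGrid {g ε : ℕ → ℝ} (hg : ∀ n, 0 < g n) (hε : ∀ n, 0 < ε n)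
    (hg₀ : Tendsto g atTop (𝓝 0)) : IsNowhereDense (⋂ n, farFromGrid (g n) (ε n)) := by
  rw [(isClosed_iInter fun n => isClosed_farFromGrid (g n) (ε n)).isNowhereDense_iff,
    eq_empty_iff_forall_notMem]
  intro x hx
  obtain ⟨r, hr, hball⟩ := Metric.isOpen_iff.1 isOpen_interior x hx
  obtain ⟨n, hn⟩ := (hg₀.eventually (gt_mem_nhds hr)).exists
  have hnear : ⌊x / g n⌋ * g n ∈ Metric.ball x r := by
    rw [Metric.mem_ball, Real.dist_eq, abs_sub_comm,
      abs_of_nonneg (Int.sub_floor_div_mul_nonneg x (hg n))]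
    exact (Int.sub_floor_div_mul_lt x (hg n)).trans hn
  exact int_mul_notMem_farFromGrid (hε n) _ (mem_iInter.1 (interior_subset (hball hnear)) n)

lemma exists_sub_subset_farFromGrid_notMem {β : ℝ} (hβ0 : 0 < β) (hβ13 : β < 1 / 3) {A : Ivl}
    (hA : 0 < diam A) (x : ℝ) :
    ∃ B, Sub B A ∧ diam B = β * diam A ∧
      toSet B ⊆ farFromGrid ((1 - β) * diam A) ((1 - 3 * β) * diam A / 4) ∧ x ∉ toSet B := by
  obtain ⟨s, hAs, hsA, hsF, hxs⟩ := exists_Icc_subset_farFromGrid_notMem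
    (g := (1 - β) * diam A) (ε := (1 - 3 * β) * diam A / 4) (l := β * diam A)
    (by nlinarith) (by positivity) (by nlinarith) A.1 x
  refine ⟨(s, s + β * diam A), Icc_subset_Icc hAs ?_, by simp [diam], hsF, hxs⟩
  unfold diam at hsA ⊢
  linarith

def markovStrategy (r : ℕ → Ivl → Ivl) : Strategy := fun h =>
  match h.getLast? with
  | none => (0, 1)
  | some A => r (h.length - 1) A

lemma markovStrategy_histA_zero (r : ℕ → Ivl → Ivl) (A : ℕ → Ivl) :
    markovStrategy r (histA A 0) = (0, 1) := rfl

lemma markovStrategy_histA_succ (r : ℕ → Ivl → Ivl) (A : ℕ → Ivl) (n : ℕ) :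
    markovStrategy r (histA A (n + 1)) = r n (A n) := by
  have hne : histA A (n + 1) ≠ [] := by simp [histA]
  rw [markovStrategy, List.getLast?_eq_some_getLast hne]
  simp only [histA, List.getLast_ofFn, List.length_ofFn]
  rfl

section Steering

variable {α β : ℝ} {r : ℕ → Ivl → Ivl}

lemma diam_markovStrategy_histA (hr : ∀ n A, diam A = α * (α * β) ^ n → diam (r n A) = β * diam A)
    (A : ℕ → Ivl) (n : ℕ) (hA : ∀ m < n, diam (A m) = α * diam (markovStrategy r (histA A m))) :
    diam (markovStrategy r (histA A n)) = (α * β) ^ n := by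
  induction n with
  | zero => simp [markovStrategy_histA_zero, diam]
  | succ n ih =>
    have hAn : diam (A n) = α * (α * β) ^ n := by
      rw [hA n n.lt_succ_self, ih fun m hm => hA m (hm.trans n.lt_succ_self)]
    rw [markovStrategy_histA_succ, hr n _ hAn, hAn]
    ring

lemma bobWinsWith_markovStrategy {T : Set ℝ} {F : ℕ → Set ℝ} {y : ℕ → ℝ}
    (hT : T ∩ ⋂ n, F n ⊆ range y)
    (hr : ∀ n A, diam A = α * (α * β) ^ n → Sub (r n A) A ∧ diam (r n A) = β * diam A ∧
      toSet (r n A) ⊆ F n ∧ y n ∉ toSet (r n A)) :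
    BobWinsWith α β T (markovStrategy r) := by
  have hdiam := diam_markovStrategy_histA fun n A hA => (hr n A hA).2.1
  refine ⟨⟨by norm_num [markovStrategy, diam], fun A n hA => ?_⟩, fun A hA x hx hxT => ?_⟩
  · have hAn : diam (A n) = α * (α * β) ^ n := by
      rw [(hA n le_rfl).2, hdiam A n fun m hm => (hA m hm.le).2]
    rw [markovStrategy_histA_succ]
    exact ⟨(hr n _ hAn).1, (hr n _ hAn).2.1⟩
  · have hAn n : diam (A n) = α * (α * β) ^ n := by
      rw [(hA n).2, hdiam A n fun m _ => (hA m).2]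
    have hxr n : x ∈ toSet (r n (A n)) := by
      simpa only [markovStrategy_histA_succ] using (hA (n + 1)).1 (hx (n + 1))
    obtain ⟨n, rfl⟩ := hT ⟨hxT, mem_iInter.2 fun n => (hr n _ (hAn n)).2.2.1 (hxr n)⟩
    exact (hr n _ (hAn n)).2.2.2 (hxr n)

lemma bobWinning_of_forall_exists {T : Set ℝ} (F : ℕ → Set ℝ) (y : ℕ → ℝ)
    (hT : T ∩ ⋂ n, F n ⊆ range y)
    (hmove : ∀ n A, diam A = α * (α * β) ^ n → ∃ B, Sub B A ∧ diam B = β * diam A ∧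
      toSet B ⊆ F n ∧ y n ∉ toSet B) :
    BobWinning α β T := by
  classical
  let r n A := if hA : diam A = α * (α * β) ^ n then (hmove n A hA).choose else A
  refine ⟨markovStrategy r, bobWinsWith_markovStrategy hT fun n A hA => ?_⟩
  simpa only [r, dif_pos hA] using (hmove n A hA).choose_spec

end Steering

/-- Alice's `n`-th move has length `a = α (αβ)ⁿ`; Bob's answer has length `βa`, which leaves room
for a grid of spacing `(1 - β)a`, and `ε = (1 - 3β)a/4` makes `2ε + 2βa < (1 - β)a`. -/
def cantorSet (α β : ℝ) : Set ℝ :=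
  ⋂ n : ℕ, farFromGrid ((1 - β) * (α * (α * β) ^ n)) ((1 - 3 * β) * (α * (α * β) ^ n) / 4)

lemma isMeagre_cantorSet {α β : ℝ} (hα0 : 0 < α) (hα1 : α < 1) (hβ0 : 0 < β) (hβ13 : β < 1 / 3) :
    IsMeagre (cantorSet α β) := by
  have hαβ : α * β < 1 := by nlinarith
  refine (isNowhereDense_iInter_farFromGrid (fun n => mul_pos (by linarith) (by positivity))
    (fun n => div_pos (mul_pos (by linarith) (by positivity)) four_pos) ?_).isMeagre
  simpa using ((tendsto_pow_atTop_nhds_zero_of_lt_one (by positivity) hαβ).const_mul α).const_mul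
    (1 - β)

/-- for `0 < α < 1`, `0 < β < 1/3`, Bob has a winning strategy
in the `(α,β)`-game on any Luzin set. -/
theorem stmt17 (α β : ℝ) (hα0 : 0 < α) (hα1 : α < 1) (hβ0 : 0 < β)
    (hβ13 : β < 1/3) (L : Set ℝ) (hL : IsLuzin L) :
    BobWinning α β L := by
  obtain ⟨y, hy⟩ := countable_iff_exists_subset_range.1
    (hL _ (isMeagre_cantorSet hα0 hα1 hβ0 hβ13))
  refine bobWinning_of_forall_exists _ y hy fun n A hA => ?_
  have hmove := exists_sub_subset_farFromGrid_notMem hβ0 hβ13 (hA ▸ by positivity : 0 < diam A)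
    (y n)
  rwa [hA] at hmove ⊢

end Schmidt
end

section
/- Let 0 < α < 1 and 0 < β < 1/3. Inside the unit interval, construct a Cantor-like set P as follows: at stage 0 take finitely many pairwise disjoint closed intervals of length αβ separated by gaps of length (α − 3αβ)/3 > 0; at stage n+1, inside each stage-n interval of length (αβ)ⁿ place pairwise disjoint closed intervals of length (αβ)^{n+1} separated by gaps of length (αβ)ⁿ·(α − 3αβ)/3. Then: (1) P = ⋂ₙ (union of stage-n intervals) has Lebesgue measure zero; (2) P is nowhere dense; and (3) every closed interval of length (αβ)^{n-1}·α contained in a stage-(n−1) interval contains at least two stage-n intervals of P. -/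
namespace Schmidt

/-! The stage-`(n+1)` left endpoints are the points `y + k δ cⁿ`, `k ≤ M`, for `y` a stage-`n`
left endpoint, where `c = αβ`, `δ = α/3` and `M` is an integer in `[3/α - 2, 3/α - 1)`.
Then `Mδ + c ≤ 1` keeps the children inside their parent; `(M+1)c < 1` keeps children of
different parents `δcⁿ` apart and makes the total length `((M+1)c)ⁿ` of stage `n` tend to `0`;
and two consecutive children span `2δcⁿ + cⁿ⁺¹ ≤ αcⁿ`, so every window of length `αcⁿ` inside
a parent catches two of them. A closed null set is nowhere dense. -/

noncomputable def cantorStage (c δ : ℝ) (M : ℕ) : ℕ → Finset ℝ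
  | 0 => {0}
  | n + 1 => (cantorStage c δ M n).biUnion fun y =>
      (Finset.range (M + 1)).image fun k : ℕ => y + k * (δ * c ^ n)

lemma exists_nat_mul_mem_Ico {a D : ℝ} (ha : 0 ≤ a) (hD : 0 < D) :
    ∃ k : ℕ, a ≤ k * D ∧ k * D < a + D := by
  refine ⟨⌈a / D⌉₊, (div_le_iff₀ hD).1 (Nat.le_ceil _), ?_⟩
  have := mul_lt_mul_of_pos_right (Nat.ceil_lt_add_one (div_nonneg ha hD.le)) hD
  rwa [add_mul, div_mul_cancel₀ _ hD.ne', one_mul] at this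

namespace cantorStage

variable {c δ : ℝ} {M n : ℕ}

lemma mem_succ_iff {x : ℝ} :
    x ∈ cantorStage c δ M (n + 1) ↔
      ∃ y ∈ cantorStage c δ M n, ∃ k ≤ M, x = y + k * (δ * c ^ n) := by
  simp only [cantorStage, Finset.mem_biUnion, Finset.mem_image, Finset.mem_range,
    Nat.lt_succ_iff, eq_comm]

lemma add_mem_succ {y : ℝ} (hy : y ∈ cantorStage c δ M n) {k : ℕ} (hk : k ≤ M) :
    y + k * (δ * c ^ n) ∈ cantorStage c δ M (n + 1) :=
  mem_succ_iff.2 ⟨y, hy, k, hk, rfl⟩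

lemma card_le : (cantorStage c δ M n).card ≤ (M + 1) ^ n := by
  induction n with
  | zero => simp [cantorStage]
  | succ n ih =>
    calc (cantorStage c δ M (n + 1)).card
        ≤ ∑ _y ∈ cantorStage c δ M n, (Finset.range (M + 1)).card :=
          Finset.card_biUnion_le.trans (Finset.sum_le_sum fun _ _ => Finset.card_image_le)
      _ = (cantorStage c δ M n).card * (M + 1) := by simp
      _ ≤ (M + 1) ^ (n + 1) := by rw [pow_succ]; gcongr

lemma Icc_subset_parent (hc : 0 ≤ c) (hδ : 0 ≤ δ) (hM : M * δ + c ≤ 1) {x : ℝ}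
    (hx : x ∈ cantorStage c δ M (n + 1)) :
    ∃ y ∈ cantorStage c δ M n, Set.Icc x (x + c ^ (n + 1)) ⊆ Set.Icc y (y + c ^ n) := by
  obtain ⟨y, hy, k, hk, rfl⟩ := mem_succ_iff.1 hx
  refine ⟨y, hy, Set.Icc_subset_Icc (le_add_of_nonneg_right (by positivity)) ?_⟩
  have hkM : (k : ℝ) * δ ≤ M * δ := by gcongr
  calc y + k * (δ * c ^ n) + c ^ (n + 1) = y + (k * δ + c) * c ^ n := by ring
    _ ≤ y + 1 * c ^ n := by gcongr; linarith
    _ = y + c ^ n := by rw [one_mul]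

lemma separated_succ_of_separated (hδc : 0 ≤ δ * c ^ n)
    (hsep : ∀ y ∈ cantorStage c δ M n, ∀ y' ∈ cantorStage c δ M n, y ≠ y' →
      (M + 1) * (δ * c ^ n) ≤ |y - y'|) :
    ∀ x ∈ cantorStage c δ M (n + 1), ∀ x' ∈ cantorStage c δ M (n + 1), x ≠ x' →
      δ * c ^ n ≤ |x - x'| := by
  intro x hx x' hx' hne
  obtain ⟨y, hy, k, hk, rfl⟩ := mem_succ_iff.1 hx
  obtain ⟨y', hy', k', hk', rfl⟩ := mem_succ_iff.1 hx'
  have hsplit : y + k * (δ * c ^ n) - (y' + k' * (δ * c ^ n)) =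
      (y - y') + ((k : ℝ) - k') * (δ * c ^ n) := by ring
  rcases eq_or_ne y y' with rfl | hyy
  · have hkk : (1 : ℝ) ≤ |(k : ℝ) - k'| := by
      have : k ≠ k' := by rintro rfl; exact hne rfl
      exact_mod_cast Int.one_le_abs (sub_ne_zero.2 (Int.natCast_inj.not.2 this))
    rw [hsplit, sub_self, zero_add, abs_mul, abs_of_nonneg hδc]
    exact le_mul_of_one_le_left hδc hkk
  · have hkk : |(k : ℝ) - k'| ≤ M :=
      abs_sub_le_of_nonneg_of_le (by positivity) (by exact_mod_cast hk)
        (by positivity) (by exact_mod_cast hk')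
    have hshift : |((k : ℝ) - k') * (δ * c ^ n)| ≤ M * (δ * c ^ n) := by
      rw [abs_mul, abs_of_nonneg hδc]; gcongr
    have := abs_sub_abs_le_abs_sub (y - y') (-(((k : ℝ) - k') * (δ * c ^ n)))
    rw [abs_neg, sub_neg_eq_add, ← hsplit] at this
    linarith [hsep y hy y' hy' hyy]

lemma separated_succ (hc : 0 ≤ c) (hδ : 0 ≤ δ) (hM : (M + 1) * c ≤ 1) :
    ∀ n, ∀ x ∈ cantorStage c δ M (n + 1), ∀ x' ∈ cantorStage c δ M (n + 1), x ≠ x' →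
      δ * c ^ n ≤ |x - x'|
  | 0 => separated_succ_of_separated (by positivity) fun y hy y' hy' hne => by
      simp only [cantorStage, Finset.mem_singleton] at hy hy'
      exact absurd (hy.trans hy'.symm) hne
  | n + 1 => separated_succ_of_separated (by positivity) fun y hy y' hy' hne =>
      calc ((M : ℝ) + 1) * (δ * c ^ (n + 1)) = δ * c ^ n * ((M + 1) * c) := by ring
        _ ≤ δ * c ^ n * 1 := by gcongr
        _ = δ * c ^ n := mul_one _
        _ ≤ |y - y'| := separated_succ hc hδ hM n y hy y' hy' hne

lemma volume_biUnion_le (hc : 0 ≤ c) (n : ℕ) :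
    MeasureTheory.volume (⋃ x ∈ cantorStage c δ M n, Set.Icc x (x + c ^ n)) ≤
      ((M + 1 : ENNReal) * ENNReal.ofReal c) ^ n :=
  calc MeasureTheory.volume (⋃ x ∈ cantorStage c δ M n, Set.Icc x (x + c ^ n))
      ≤ ∑ x ∈ cantorStage c δ M n, MeasureTheory.volume (Set.Icc x (x + c ^ n)) :=
        MeasureTheory.measure_biUnion_finset_le _ _
    _ = (cantorStage c δ M n).card * ENNReal.ofReal c ^ n := by
        simp [Real.volume_Icc, ENNReal.ofReal_pow hc]
    _ ≤ ((M + 1) ^ n : ℕ) * ENNReal.ofReal c ^ n := by gcongr; exact card_le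
    _ = ((M + 1 : ENNReal) * ENNReal.ofReal c) ^ n := by push_cast; rw [mul_pow]

lemma volume_iInter_eq_zero (hc : 0 ≤ c) (hM : (M + 1) * c < 1) :
    MeasureTheory.volume (⋂ n, ⋃ x ∈ cantorStage c δ M n, Set.Icc x (x + c ^ n)) = 0 := by
  have hratio : (M + 1 : ENNReal) * ENNReal.ofReal c < 1 := by
    rw [← ENNReal.ofReal_natCast, ← ENNReal.ofReal_one, ← ENNReal.ofReal_add (by positivity)
      zero_le_one, ← ENNReal.ofReal_mul (by positivity)]
    exact (ENNReal.ofReal_lt_ofReal_iff one_pos).2 hM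
  refine le_antisymm (ge_of_tendsto' (ENNReal.tendsto_pow_atTop_nhds_zero_of_lt_one hratio)
    fun n => ?_) bot_le
  exact (MeasureTheory.measure_mono (Set.iInter_subset _ n)).trans (volume_biUnion_le hc n)

lemma exists_two_mem_succ_of_window {w : ℝ} (hc : 0 < c) (hδ : 0 < δ)
    (hw : c + 2 * δ ≤ w) (hM : 1 - w + δ ≤ M * δ) {y t : ℝ}
    (hy : y ∈ cantorStage c δ M n)
    (ht : Set.Icc t (t + w * c ^ n) ⊆ Set.Icc y (y + c ^ n)) :
    ∃ x₁ ∈ cantorStage c δ M (n + 1), ∃ x₂ ∈ cantorStage c δ M (n + 1), x₁ ≠ x₂ ∧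
      Set.Icc x₁ (x₁ + c ^ (n + 1)) ⊆ Set.Icc t (t + w * c ^ n) ∧
      Set.Icc x₂ (x₂ + c ^ (n + 1)) ⊆ Set.Icc t (t + w * c ^ n) := by
  have hcn : 0 < c ^ n := pow_pos hc n
  obtain ⟨hyt, hty⟩ := (Set.Icc_subset_Icc_iff
    (le_add_of_nonneg_right (by nlinarith))).1 ht
  set D := δ * c ^ n with hD_def
  have hD : 0 < D := by positivity
  obtain ⟨k, hk₁, hk₂⟩ := exists_nat_mul_mem_Ico (sub_nonneg.2 hyt) hD
  have hkM : k + 1 ≤ M := by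
    have : ((k : ℝ) + 1) * D < (M + 1) * D := by
      calc ((k : ℝ) + 1) * D < (1 - w + 2 * δ) * c ^ n := by nlinarith
        _ ≤ (M + 1) * D := by rw [hD_def]; nlinarith
    exact Nat.lt_succ_iff.1 (by exact_mod_cast lt_of_mul_lt_mul_right this hD.le)
  have hright : y + (k + 1 : ℕ) * D + c ^ (n + 1) ≤ t + w * c ^ n := by
    push_cast; rw [pow_succ]; nlinarith
  refine ⟨_, add_mem_succ hy (Nat.le_of_succ_le hkM), _, add_mem_succ hy hkM, ?_,
    Set.Icc_subset_Icc (by linarith) (by push_cast at hright ⊢; linarith),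
    Set.Icc_subset_Icc (by push_cast; linarith) hright⟩
  push_cast
  exact fun h => by linarith

end cantorStage

/-- the Cantor-like set used against Luzin/Sierpinski sets.
`S n` records the left endpoints of the stage-`n` intervals, which have
length `(αβ)ⁿ`; stage `0` is the unit interval.  Stage-`(n+1)` intervals sit
inside stage-`n` intervals, are separated by gaps of length at least
`(αβ)ⁿ(α - 3αβ)/3`, every subinterval of a stage-`n` interval of length
`α(αβ)ⁿ` contains at least two stage-`(n+1)` intervals, and the resulting
intersection `P` has Lebesgue measure zero and is nowhere dense. -/
theorem stmt18 (α β : ℝ) (hα0 : 0 < α) (hα1 : α < 1) (hβ0 : 0 < β)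
    (hβ13 : β < 1/3) :
    ∃ S : ℕ → Finset ℝ,
      S 0 = {0} ∧
      (∀ n, ∀ x ∈ S (n + 1), ∃ y ∈ S n,
        Set.Icc x (x + (α * β) ^ (n + 1)) ⊆ Set.Icc y (y + (α * β) ^ n)) ∧
      (∀ n, ∀ x ∈ S (n + 1), ∀ y ∈ S (n + 1), x ≠ y →
        (α * β) ^ (n + 1) + (α * β) ^ n * (α - 3 * α * β) / 3 ≤ |x - y|) ∧
      (∀ n, ∀ y ∈ S n, ∀ t : ℝ,
        Set.Icc t (t + α * (α * β) ^ n) ⊆ Set.Icc y (y + (α * β) ^ n) →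
        ∃ x₁ ∈ S (n + 1), ∃ x₂ ∈ S (n + 1), x₁ ≠ x₂ ∧
          Set.Icc x₁ (x₁ + (α * β) ^ (n + 1)) ⊆ Set.Icc t (t + α * (α * β) ^ n) ∧
          Set.Icc x₂ (x₂ + (α * β) ^ (n + 1)) ⊆ Set.Icc t (t + α * (α * β) ^ n)) ∧
      MeasureTheory.volume
        (⋂ n, ⋃ x ∈ S n, Set.Icc x (x + (α * β) ^ n)) = 0 ∧
      IsNowhereDense (⋂ n, ⋃ x ∈ S n, Set.Icc x (x + (α * β) ^ n)) := by
  have hc : 0 < α * β := mul_pos hα0 hβ0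
  have hδ : 0 < α / 3 := by positivity
  obtain ⟨M, hM₁, hM₂⟩ : ∃ M : ℕ, 3 / α - 2 ≤ M ∧ (M : ℝ) < 3 / α - 1 :=
    ⟨⌈3 / α - 2⌉₊, Nat.le_ceil _, by
      have h2 : 2 ≤ 3 / α := (le_div_iff₀ hα0).2 (by linarith)
      linarith [Nat.ceil_lt_add_one (sub_nonneg.2 h2)]⟩
  have hα3 : 3 / α * (α / 3) = 1 := by field_simp
  have hwindow : 1 - α + α / 3 ≤ M * (α / 3) := by nlinarith
  have hparent : M * (α / 3) + α * β ≤ 1 := by nlinarith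
  have hratio : (M + 1) * (α * β) < 1 := by nlinarith
  have hvol := cantorStage.volume_iInter_eq_zero (δ := α / 3) hc.le hratio
  refine ⟨cantorStage (α * β) (α / 3) M, rfl,
    fun n x hx => cantorStage.Icc_subset_parent hc.le hδ.le hparent hx,
    fun n x hx y hy hne => ?_,
    fun n y hy t ht =>
      cantorStage.exists_two_mem_succ_of_window hc hδ (by nlinarith) hwindow hy ht,
    hvol, IsNowhereDense.of_isClosed_null ?_ hvol⟩
  · calc (α * β) ^ (n + 1) + (α * β) ^ n * (α - 3 * α * β) / 3 = α / 3 * (α * β) ^ n := by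
          ring
      _ ≤ |x - y| := cantorStage.separated_succ hc.le hδ.le hratio.le n x hx y hy hne
  · exact isClosed_iInter fun n =>
      (Finset.finite_toSet _).isClosed_biUnion fun _ _ => isClosed_Icc
end Schmidt
end
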